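/- arXiv:1904.11146 — 9 statements merged into one kernel-verified Lean document; each statement's English description precedes it below -/
import Mathlib

section
/- Let G be a countable discrete group, let g ∈ G, and let Z be the centralizer of g in G. Let G act on a set M. Suppose χ : M → [0,∞) satisfies ∑_{x∈G} χ(x·m)² = 1 for every m ∈ M, and χ_G : G → [0,∞) satisfies ∑_{z∈Z} χ_G(xz⁻¹)² = 1 for every x ∈ G. Define χ_g : M → [0,∞) by χ_g(m)² = ∑_{x∈G} χ_G(x)² χ(xg·m)². Then ∑_{z∈Z} χ_g(z·m)² = 1 for every m ∈ M (all sums being sums of nonnegative terms, taken in [0,∞]). -/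
open scoped ENNReal NNReal

/-- If `χ` is a (squared-summing-to-one) cutoff function for the action of a
countable discrete group `G` on a set `M`, and `χ_G` is a cutoff function for the right
multiplication action of the centraliser `Z` of `g` on `G`, then the function `χ_g` defined by
`χ_g(m)² = ∑_{x ∈ G} χ_G(x)² χ(xg·m)²` is a cutoff function for the action of `Z` on `M`. -/
theorem cutoff_for_centralizer_action
    {G M : Type*} [Group G] [Countable G] [MulAction G M] (g : G)
    (χ : M → ℝ≥0) (χG : G → ℝ≥0) (χg : M → ℝ≥0)
    (hχ : ∀ m : M, ∑' x : G, ((χ (x • m) : ℝ≥0∞)) ^ 2 = 1)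
    (hχG : ∀ x : G, ∑' z : Subgroup.centralizer ({g} : Set G),
      ((χG (x * (z : G)⁻¹) : ℝ≥0∞)) ^ 2 = 1)
    (hχg : ∀ m : M, ((χg m : ℝ≥0∞)) ^ 2
      = ∑' x : G, ((χG x : ℝ≥0∞)) ^ 2 * ((χ ((x * g) • m) : ℝ≥0∞)) ^ 2) :
    ∀ m : M, ∑' z : Subgroup.centralizer ({g} : Set G), ((χg ((z : G) • m) : ℝ≥0∞)) ^ 2 = 1 := by
  intro m
  have key : ∀ z : Subgroup.centralizer ({g} : Set G),
      ((χg ((z : G) • m) : ℝ≥0∞)) ^ 2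
        = ∑' y : G, ((χG (y * (z : G)⁻¹) : ℝ≥0∞)) ^ 2 * ((χ ((y * g) • m) : ℝ≥0∞)) ^ 2 := by
    intro z
    rw [hχg, ← (Equiv.mulRight (z : G)).tsum_eq
      (fun y => ((χG (y * (z : G)⁻¹) : ℝ≥0∞)) ^ 2 * ((χ ((y * g) • m) : ℝ≥0∞)) ^ 2)]
    refine tsum_congr fun x => ?_
    have hz : (z : G) * g = g * (z : G) :=
      (Subgroup.mem_centralizer_iff.mp z.2 g rfl).symm
    simp only [Equiv.coe_mulRight, mul_inv_cancel_right]
    congr 2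
    rw [smul_smul]
    congr 1
    rw [mul_assoc, ← hz, mul_assoc]
  calc ∑' z : Subgroup.centralizer ({g} : Set G), ((χg ((z : G) • m) : ℝ≥0∞)) ^ 2
      = ∑' (z : Subgroup.centralizer ({g} : Set G)) (y : G),
          ((χG (y * (z : G)⁻¹) : ℝ≥0∞)) ^ 2 * ((χ ((y * g) • m) : ℝ≥0∞)) ^ 2 :=
        tsum_congr key
    _ = ∑' (y : G) (z : Subgroup.centralizer ({g} : Set G)),
          ((χG (y * (z : G)⁻¹) : ℝ≥0∞)) ^ 2 * ((χ ((y * g) • m) : ℝ≥0∞)) ^ 2 :=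
        ENNReal.tsum_comm
    _ = ∑' (y : G), (∑' z : Subgroup.centralizer ({g} : Set G),
          ((χG (y * (z : G)⁻¹) : ℝ≥0∞)) ^ 2) * ((χ ((y * g) • m) : ℝ≥0∞)) ^ 2 :=
        tsum_congr fun y => ENNReal.tsum_mul_right
    _ = ∑' (y : G), ((χ ((y * g) • m) : ℝ≥0∞)) ^ 2 := by
        refine tsum_congr fun y => ?_
        rw [hχG y, one_mul]
    _ = 1 := by
        rw [← hχ m]
        exact (Equiv.mulRight g).tsum_eq fun x => ((χ (x • m) : ℝ≥0∞)) ^ 2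
end

section
/- Let G be a countable discrete group acting measurably on a measure space (M, μ) such that μ is invariant under every element of G. Let g ∈ G, let Z be its centralizer, and let (g) = {hgh⁻¹ : h ∈ G} be its conjugacy class. Let χ : M → [0,∞) be measurable with ∑_{x∈G} χ(x·m)² = 1 for all m ∈ M, let χ_G : G → [0,∞) satisfy ∑_{z∈Z} χ_G(xz⁻¹)² = 1 for all x ∈ G, and let χ_g : M → [0,∞) be a measurable function with χ_g(m)² = ∑_{x∈G} χ_G(x)² χ(xg·m)² for all m. Let κ : M × M → ℂ be measurable and G-invariant, i.e. κ(x·m, x·m') = κ(m, m') for all x ∈ G and m, m' ∈ M. If ∑_{k∈(g)} ∫_M χ(k·m)² |κ(k⁻¹·m, m)| dμ(m) < ∞, then ∫_M χ_g(m)² |κ(g⁻¹·m, m)| dμ(m) < ∞ and ∑_{k∈(g)} ∫_M χ(k·m)² κ(k⁻¹·m, m) dμ(m) = ∫_M χ_g(m)² κ(g⁻¹·m, m) dμ(m). -/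
open scoped ENNReal NNReal
open MeasureTheory

/-- Conversion: an `ℝ≥0∞`-valued tsum identity for an `ℝ≥0`-valued family yields a
`HasSum` statement for the family coerced into `ℂ`. -/
lemma hasSum_ofNNReal_complex {ι : Type*} {v : ι → ℝ≥0} {r : ℝ≥0}
    (h : ∑' i, (v i : ℝ≥0∞) = (r : ℝ≥0∞)) :
    HasSum (fun i => ((v i : ℝ) : ℂ)) ((r : ℝ) : ℂ) := by
  have hs : Summable v := ENNReal.tsum_coe_ne_top_iff_summable.1 (by simp [h])
  have h2 : HasSum v r := by
    have hc : ((∑' i, v i : ℝ≥0) : ℝ≥0∞) = (r : ℝ≥0∞) := by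
      rw [ENNReal.coe_tsum hs, h]
    exact (ENNReal.coe_injective hc) ▸ hs.hasSum
  have h3 := (NNReal.hasSum_coe.2 h2).map Complex.ofRealHom Complex.continuous_ofReal
  simpa [Function.comp_def] using h3

/-- A sum over the fiber `{x : G | x g x⁻¹ = h₀ g h₀⁻¹}` equals a sum over the
centraliser of `g`, via the bijection `z ↦ h₀ z⁻¹`. -/
lemma tsum_fiber_centralizer {G : Type*} [Group G] {α : Type*} [AddCommMonoid α]
    [TopologicalSpace α] (g h₀ : G) (w : G → α) (p : G → Prop)
    (hp : ∀ x, p x ↔ x * g * x⁻¹ = h₀ * g * h₀⁻¹) :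
    ∑' x : {x : G // p x}, w (x : G)
      = ∑' z : Subgroup.centralizer ({g} : Set G), w (h₀ * (z : G)⁻¹) := by
  have mem1 : ∀ z : Subgroup.centralizer ({g} : Set G), p (h₀ * (z : G)⁻¹) := by
    intro z
    have hz : (z : G) * g = g * (z : G) := Subgroup.mem_centralizer_singleton_iff.1 z.2
    have hz' : (z : G)⁻¹ * g * (z : G) = g := by
      rw [mul_assoc, ← hz, ← mul_assoc, inv_mul_cancel, one_mul]
    refine (hp _).2 ?_
    calc (h₀ * (z : G)⁻¹) * g * (h₀ * (z : G)⁻¹)⁻¹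
        = h₀ * ((z : G)⁻¹ * g * (z : G)) * h₀⁻¹ := by group
      _ = h₀ * g * h₀⁻¹ := by rw [hz']
  have mem2 : ∀ x : {x : G // p x},
      (x : G)⁻¹ * h₀ ∈ Subgroup.centralizer ({g} : Set G) := by
    intro x
    have hx : (x : G) * g * (x : G)⁻¹ = h₀ * g * h₀⁻¹ := (hp _).1 x.2
    refine Subgroup.mem_centralizer_singleton_iff.2 ?_
    apply mul_left_cancel (a := (x : G))
    calc (x : G) * (((x : G)⁻¹ * h₀) * g) = h₀ * g := by group
      _ = ((x : G) * g * (x : G)⁻¹) * h₀ := by rw [hx]; group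
      _ = (x : G) * (g * ((x : G)⁻¹ * h₀)) := by group
  exact (Equiv.tsum_eq
    { toFun := fun z : Subgroup.centralizer ({g} : Set G) =>
        (⟨h₀ * (z : G)⁻¹, mem1 z⟩ : {x : G // p x})
      invFun := fun x => (⟨(x : G)⁻¹ * h₀, mem2 x⟩ : Subgroup.centralizer ({g} : Set G))
      left_inv := fun z => Subtype.ext (by group)
      right_inv := fun x => Subtype.ext (by group) }
    (fun x : {x : G // p x} => w (x : G))).symm

set_option maxHeartbeats 1000000 in
/-- For a countable discrete group `G` acting measurably on a measure space
`(M, μ)` preserving `μ`, with cutoff functions `χ` (for `G` on `M`), `χ_G` (for the right action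
of the centraliser `Z` of `g` on `G`) and the induced `χ_g`, and a `G`-invariant kernel `κ`:
if the sum over the conjugacy class `(g)` of the integrals of `χ(k·m)² |κ(k⁻¹·m, m)|` is finite,
then `∫ χ_g(m)² |κ(g⁻¹·m, m)| dμ(m)` is finite and
`∑_{k ∈ (g)} ∫ χ(k·m)² κ(k⁻¹·m, m) dμ(m) = ∫ χ_g(m)² κ(g⁻¹·m, m) dμ(m)`. -/
theorem gTrace_eq_cutoff_integral
    {G M : Type*} [Group G] [Countable G] [MulAction G M] [MeasurableSpace M]
    (μ : Measure M)
    (hmeas : ∀ x : G, Measurable fun m : M => x • m)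
    (hinv : ∀ x : G, MeasurePreserving (fun m : M => x • m) μ μ)
    (g : G)
    (χ : M → ℝ≥0) (hχmeas : Measurable χ)
    (hχ : ∀ m : M, ∑' x : G, ((χ (x • m) : ℝ≥0∞)) ^ 2 = 1)
    (χG : G → ℝ≥0)
    (hχG : ∀ x : G, ∑' z : Subgroup.centralizer ({g} : Set G),
      ((χG (x * (z : G)⁻¹) : ℝ≥0∞)) ^ 2 = 1)
    (χg : M → ℝ≥0) (hχgmeas : Measurable χg)
    (hχg : ∀ m : M, ((χg m : ℝ≥0∞)) ^ 2
      = ∑' x : G, ((χG x : ℝ≥0∞)) ^ 2 * ((χ ((x * g) • m) : ℝ≥0∞)) ^ 2)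
    (κ : M × M → ℂ) (hκmeas : Measurable κ)
    (hκinv : ∀ (x : G) (m m' : M), κ (x • m, x • m') = κ (m, m'))
    (hfin : ∑' k : {k : G // ∃ h : G, k = h * g * h⁻¹},
        ∫⁻ m, ((χ ((k : G) • m) : ℝ≥0∞)) ^ 2 * (‖κ ((k : G)⁻¹ • m, m)‖₊ : ℝ≥0∞) ∂μ < ⊤) :
    (∫⁻ m, ((χg m : ℝ≥0∞)) ^ 2 * (‖κ (g⁻¹ • m, m)‖₊ : ℝ≥0∞) ∂μ < ⊤) ∧
    ∑' k : {k : G // ∃ h : G, k = h * g * h⁻¹},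
        ∫ m, (((χ ((k : G) • m) : ℝ) : ℂ)) ^ 2 * κ ((k : G)⁻¹ • m, m) ∂μ
      = ∫ m, (((χg m : ℝ) : ℂ)) ^ 2 * κ (g⁻¹ • m, m) ∂μ := by
  classical
  set K := {k : G // ∃ h : G, k = h * g * h⁻¹} with hK
  set q : G → K := fun x => ⟨x * g * x⁻¹, x, rfl⟩ with hq
  -- basic measurability
  have emb : ∀ y : G, MeasurableEmbedding (fun m : M => y • m) := fun y =>
    MeasurableEquiv.measurableEmbedding
      { toEquiv := MulAction.toPerm y
        measurable_toFun := hmeas y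
        measurable_invFun := hmeas y⁻¹ }
  have mκ : ∀ y : G, Measurable fun m : M => κ (y⁻¹ • m, m) := fun y =>
    hκmeas.comp ((hmeas y⁻¹).prodMk measurable_id)
  have mχ : ∀ y : G, Measurable fun m : M => χ (y • m) := fun y => hχmeas.comp (hmeas y)
  -- the `ℝ≥0∞`-valued and `ℂ`-valued "base" integrals
  set B : G → ℝ≥0∞ :=
    fun y => ∫⁻ m, ((χ m : ℝ≥0∞)) ^ 2 * (‖κ (y⁻¹ • m, m)‖₊ : ℝ≥0∞) ∂μ with hB
  set Ic : G → ℂ := fun y => ∫ m, (((χ m : ℝ) : ℂ)) ^ 2 * κ (y⁻¹ • m, m) ∂μ with hIc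
  -- kernel identities
  have key1 : ∀ (k : G) (m : M), κ (k⁻¹ • k⁻¹ • m, k⁻¹ • m) = κ (k⁻¹ • m, m) := by
    intro k m
    rw [← hκinv k (k⁻¹ • k⁻¹ • m) (k⁻¹ • m), smul_inv_smul, smul_inv_smul]
  have key2 : ∀ (x : G) (m : M),
      κ (g⁻¹ • (x * g)⁻¹ • m, (x * g)⁻¹ • m) = κ ((x * g * x⁻¹)⁻¹ • m, m) := by
    intro x m
    rw [← hκinv (x * g) (g⁻¹ • (x * g)⁻¹ • m) ((x * g)⁻¹ • m), smul_inv_smul,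
      smul_smul, smul_smul]
    have hg' : x * g * g⁻¹ * (x * g)⁻¹ = (x * g * x⁻¹)⁻¹ := by group
    rw [hg']
  -- step 1 : change of variables for the `ℝ≥0∞` integrals over the conjugacy class
  have step1 : ∀ k : G,
      (∫⁻ m, ((χ (k • m) : ℝ≥0∞)) ^ 2 * (‖κ (k⁻¹ • m, m)‖₊ : ℝ≥0∞) ∂μ) = B k := by
    intro k
    have hg1 : Measurable fun m : M =>
        ((χ (k • m) : ℝ≥0∞)) ^ 2 * (‖κ (k⁻¹ • m, m)‖₊ : ℝ≥0∞) :=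
      (((mχ k).coe_nnreal_ennreal).pow_const 2).mul (mκ k).nnnorm.coe_nnreal_ennreal
    calc (∫⁻ m, ((χ (k • m) : ℝ≥0∞)) ^ 2 * (‖κ (k⁻¹ • m, m)‖₊ : ℝ≥0∞) ∂μ)
        = ∫⁻ m, ((χ (k • k⁻¹ • m) : ℝ≥0∞)) ^ 2
            * (‖κ (k⁻¹ • k⁻¹ • m, k⁻¹ • m)‖₊ : ℝ≥0∞) ∂μ :=
          ((hinv k⁻¹).lintegral_comp hg1).symm
      _ = B k := lintegral_congr fun m => by rw [smul_inv_smul, key1 k m]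
  have step2 : ∀ x : G,
      (∫⁻ m, ((χ ((x * g) • m) : ℝ≥0∞)) ^ 2 * (‖κ (g⁻¹ • m, m)‖₊ : ℝ≥0∞) ∂μ)
        = B (x * g * x⁻¹) := by
    intro x
    have hg1 : Measurable fun m : M =>
        ((χ ((x * g) • m) : ℝ≥0∞)) ^ 2 * (‖κ (g⁻¹ • m, m)‖₊ : ℝ≥0∞) :=
      (((mχ (x * g)).coe_nnreal_ennreal).pow_const 2).mul (mκ g).nnnorm.coe_nnreal_ennreal
    calc (∫⁻ m, ((χ ((x * g) • m) : ℝ≥0∞)) ^ 2 * (‖κ (g⁻¹ • m, m)‖₊ : ℝ≥0∞) ∂μ)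
        = ∫⁻ m, ((χ ((x * g) • (x * g)⁻¹ • m) : ℝ≥0∞)) ^ 2
            * (‖κ (g⁻¹ • (x * g)⁻¹ • m, (x * g)⁻¹ • m)‖₊ : ℝ≥0∞) ∂μ :=
          ((hinv (x * g)⁻¹).lintegral_comp hg1).symm
      _ = B (x * g * x⁻¹) := lintegral_congr fun m => by rw [smul_inv_smul, key2 x m]
  -- fiber identities
  have fiber_B : ∀ (k : K) (x : {x : G // q x = k}),
      (x : G) * g * (x : G)⁻¹ = (k : G) := fun k x => congrArg Subtype.val x.2
  have fiber_pred : ∀ k : K, ∀ h₀ : G, (k : G) = h₀ * g * h₀⁻¹ →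
      ∀ x : G, (q x = k ↔ x * g * x⁻¹ = h₀ * g * h₀⁻¹) := by
    intro k h₀ hk x
    constructor
    · intro hx
      rw [← hk]
      exact congrArg Subtype.val hx
    · intro hx
      exact Subtype.ext (by rw [hq]; simp only; rw [hx, hk])
  have fiber_equiv : ∀ k : K,
      ∑' x : {x : G // q x = k}, ((χG (x : G) : ℝ≥0∞)) ^ 2 = 1 := by
    intro k
    obtain ⟨h₀, hk⟩ := k.2
    exact (tsum_fiber_centralizer g h₀ (fun y => ((χG y : ℝ≥0∞)) ^ 2)
      (fun x => q x = k) (fiber_pred k h₀ hk)).trans (hχG h₀)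
  -- generic regrouping over fibers for `ℝ≥0∞`
  have regroup0 : ∀ fn : G → ℝ≥0∞,
      ∑' x : G, fn x = ∑' k : K, ∑' x : {x : G // q x = k}, fn (x : G) := by
    intro fn
    rw [← (Equiv.sigmaFiberEquiv q).tsum_eq fn, ENNReal.tsum_sigma']
    exact tsum_congr fun k => tsum_congr fun x => rfl
  -- the main `ℝ≥0∞` computation
  have mB2 : ∀ x : G, Measurable fun m : M =>
      ((χG x : ℝ≥0∞)) ^ 2 * ((χ ((x * g) • m) : ℝ≥0∞)) ^ 2 * (‖κ (g⁻¹ • m, m)‖₊ : ℝ≥0∞) :=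
    fun x => ((measurable_const.mul (((mχ (x * g)).coe_nnreal_ennreal).pow_const 2)).mul
      (mκ g).nnnorm.coe_nnreal_ennreal)
  have tone : (∫⁻ m, ((χg m : ℝ≥0∞)) ^ 2 * (‖κ (g⁻¹ • m, m)‖₊ : ℝ≥0∞) ∂μ)
      = ∑' x : G, ((χG x : ℝ≥0∞)) ^ 2 * B (x * g * x⁻¹) := by
    calc (∫⁻ m, ((χg m : ℝ≥0∞)) ^ 2 * (‖κ (g⁻¹ • m, m)‖₊ : ℝ≥0∞) ∂μ)
        = ∫⁻ m, ∑' x : G, ((χG x : ℝ≥0∞)) ^ 2 * ((χ ((x * g) • m) : ℝ≥0∞)) ^ 2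
            * (‖κ (g⁻¹ • m, m)‖₊ : ℝ≥0∞) ∂μ := by
          refine lintegral_congr fun m => ?_
          rw [hχg m, ← ENNReal.tsum_mul_right]
      _ = ∑' x : G, ∫⁻ m, ((χG x : ℝ≥0∞)) ^ 2 * ((χ ((x * g) • m) : ℝ≥0∞)) ^ 2
            * (‖κ (g⁻¹ • m, m)‖₊ : ℝ≥0∞) ∂μ :=
          lintegral_tsum fun x => (mB2 x).aemeasurable
      _ = ∑' x : G, ((χG x : ℝ≥0∞)) ^ 2 * B (x * g * x⁻¹) := by
          refine tsum_congr fun x => ?_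
          rw [← step2 x]
          simp only [mul_assoc]
          rw [lintegral_const_mul (f := fun m => ((χ ((x * g) • m) : ℝ≥0∞)) ^ 2
              * (‖κ (g⁻¹ • m, m)‖₊ : ℝ≥0∞)) _ ((((mχ (x * g)).coe_nnreal_ennreal).pow_const 2).mul
            (mκ g).nnnorm.coe_nnreal_ennreal)]
  have regroup : ∑' x : G, ((χG x : ℝ≥0∞)) ^ 2 * B (x * g * x⁻¹) = ∑' k : K, B (k : G) := by
    rw [regroup0 (fun x => ((χG x : ℝ≥0∞)) ^ 2 * B (x * g * x⁻¹))]
    refine tsum_congr fun k => ?_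
    calc ∑' x : {x : G // q x = k}, ((χG (x : G) : ℝ≥0∞)) ^ 2 * B ((x : G) * g * (x : G)⁻¹)
        = ∑' x : {x : G // q x = k}, ((χG (x : G) : ℝ≥0∞)) ^ 2 * B (k : G) :=
          tsum_congr fun x => by rw [fiber_B k x]
      _ = (∑' x : {x : G // q x = k}, ((χG (x : G) : ℝ≥0∞)) ^ 2) * B (k : G) :=
          ENNReal.tsum_mul_right
      _ = B (k : G) := by rw [fiber_equiv k, one_mul]
  have hsumB : ∑' k : K, B (k : G) < ⊤ := by
    calc ∑' k : K, B (k : G)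
        = ∑' k : K, ∫⁻ m, ((χ ((k : G) • m) : ℝ≥0∞)) ^ 2
            * (‖κ ((k : G)⁻¹ • m, m)‖₊ : ℝ≥0∞) ∂μ := tsum_congr fun k => (step1 (k : G)).symm
      _ < ⊤ := hfin
  have total_lt : (∫⁻ m, ((χg m : ℝ≥0∞)) ^ 2 * (‖κ (g⁻¹ • m, m)‖₊ : ℝ≥0∞) ∂μ) < ⊤ := by
    rw [tone, regroup]; exact hsumB
  refine ⟨total_lt, ?_⟩
  -- complex side: change of variables
  have step1c : ∀ k : G,
      (∫ m, (((χ (k • m) : ℝ) : ℂ)) ^ 2 * κ (k⁻¹ • m, m) ∂μ) = Ic k := by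
    intro k
    calc (∫ m, (((χ (k • m) : ℝ) : ℂ)) ^ 2 * κ (k⁻¹ • m, m) ∂μ)
        = ∫ m, (((χ (k • k⁻¹ • m) : ℝ) : ℂ)) ^ 2 * κ (k⁻¹ • k⁻¹ • m, k⁻¹ • m) ∂μ :=
          ((hinv k⁻¹).integral_comp (emb k⁻¹)
            (fun m => (((χ (k • m) : ℝ) : ℂ)) ^ 2 * κ (k⁻¹ • m, m))).symm
      _ = Ic k := by
          refine integral_congr_ae (Filter.Eventually.of_forall fun m => ?_)
          simp only
          rw [smul_inv_smul, key1 k m]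
  have step2c : ∀ x : G,
      (∫ m, (((χ ((x * g) • m) : ℝ) : ℂ)) ^ 2 * κ (g⁻¹ • m, m) ∂μ) = Ic (x * g * x⁻¹) := by
    intro x
    calc (∫ m, (((χ ((x * g) • m) : ℝ) : ℂ)) ^ 2 * κ (g⁻¹ • m, m) ∂μ)
        = ∫ m, (((χ ((x * g) • (x * g)⁻¹ • m) : ℝ) : ℂ)) ^ 2
            * κ (g⁻¹ • (x * g)⁻¹ • m, (x * g)⁻¹ • m) ∂μ :=
          ((hinv (x * g)⁻¹).integral_comp (emb (x * g)⁻¹)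
            (fun m => (((χ ((x * g) • m) : ℝ) : ℂ)) ^ 2 * κ (g⁻¹ • m, m))).symm
      _ = Ic (x * g * x⁻¹) := by
          refine integral_congr_ae (Filter.Eventually.of_forall fun m => ?_)
          simp only
          rw [smul_inv_smul, key2 x m]
  -- pointwise expansion of `χg` squared in `ℂ`
  have ptws : ∀ m : M, HasSum
      (fun x : G => (((χG x : ℝ) : ℂ)) ^ 2 * (((χ ((x * g) • m) : ℝ) : ℂ)) ^ 2)
      ((((χg m : ℝ) : ℂ)) ^ 2) := by
    intro m
    have h := hasSum_ofNNReal_complex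
      (v := fun x : G => (χG x) ^ 2 * (χ ((x * g) • m)) ^ 2) (r := (χg m) ^ 2)
      (by push_cast; exact (hχg m).symm)
    convert h using 2 with x
    · push_cast; ring
    · push_cast; ring
  -- the summand family and its nnnorm computation
  set F : G → M → ℂ := fun x m =>
    (((χG x : ℝ) : ℂ)) ^ 2 * (((χ ((x * g) • m) : ℝ) : ℂ)) ^ 2 * κ (g⁻¹ • m, m) with hF
  have Fmeas : ∀ x : G, AEStronglyMeasurable (F x) μ := by
    intro x
    refine (Measurable.stronglyMeasurable ?_).aestronglyMeasurable
    exact ((measurable_const.mul ((Complex.measurable_ofReal.comp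
      (measurable_coe_nnreal_real.comp (mχ (x * g)))).pow_const 2)).mul (mκ g))
  have Fnorm : ∀ (x : G) (m : M), (‖F x m‖₊ : ℝ≥0∞)
      = ((χG x : ℝ≥0∞)) ^ 2 * ((χ ((x * g) • m) : ℝ≥0∞)) ^ 2
        * (‖κ (g⁻¹ • m, m)‖₊ : ℝ≥0∞) := by
    intro x m
    simp only [hF, nnnorm_mul, nnnorm_pow, Complex.nnnorm_real, NNReal.nnnorm_eq,
      ENNReal.coe_mul, ENNReal.coe_pow]
  have Ffin : ∑' x : G, ∫⁻ m, (‖F x m‖₊ : ℝ≥0∞) ∂μ ≠ ⊤ := by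
    have heach : ∀ x : G, ∫⁻ m, (‖F x m‖₊ : ℝ≥0∞) ∂μ
        = ((χG x : ℝ≥0∞)) ^ 2 * B (x * g * x⁻¹) := by
      intro x
      calc ∫⁻ m, (‖F x m‖₊ : ℝ≥0∞) ∂μ
          = ∫⁻ m, ((χG x : ℝ≥0∞)) ^ 2 * ((χ ((x * g) • m) : ℝ≥0∞)) ^ 2
              * (‖κ (g⁻¹ • m, m)‖₊ : ℝ≥0∞) ∂μ := lintegral_congr fun m => Fnorm x m
        _ = ((χG x : ℝ≥0∞)) ^ 2 * B (x * g * x⁻¹) := by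
            rw [← step2 x]
            simp only [mul_assoc]
            rw [lintegral_const_mul (f := fun m => ((χ ((x * g) • m) : ℝ≥0∞)) ^ 2
              * (‖κ (g⁻¹ • m, m)‖₊ : ℝ≥0∞)) _ ((((mχ (x * g)).coe_nnreal_ennreal).pow_const 2).mul
              (mκ g).nnnorm.coe_nnreal_ennreal)]
    calc ∑' x : G, ∫⁻ m, (‖F x m‖₊ : ℝ≥0∞) ∂μ
        = ∑' x : G, ((χG x : ℝ≥0∞)) ^ 2 * B (x * g * x⁻¹) := tsum_congr heach
      _ = ∑' k : K, B (k : G) := regroup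
      _ ≠ ⊤ := hsumB.ne
  -- summability of the grouped complex family
  have hBfin : ∑' x : G, ((χG x : ℝ≥0∞)) ^ 2 * B (x * g * x⁻¹) ≠ ⊤ := by
    rw [regroup]; exact hsumB.ne
  have hIcnorm : ∀ y : G, ‖Ic y‖ ≤ (B y).toReal := by
    intro y
    refine le_trans (norm_integral_le_lintegral_norm _) ?_
    apply le_of_eq
    congr 1
    refine lintegral_congr fun m => ?_
    rw [norm_mul, norm_pow, Complex.norm_real]
    rw [ENNReal.ofReal_mul (by positivity)]
    congr 1
    · rw [Real.norm_of_nonneg (χ m).coe_nonneg, ← NNReal.coe_pow, ENNReal.ofReal_coe_nnreal,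
        ENNReal.coe_pow]
    · exact ofReal_norm _
  have csummable : Summable fun x : G => (((χG x : ℝ) : ℂ)) ^ 2 * Ic (x * g * x⁻¹) := by
    apply Summable.of_norm
    have hb : Summable fun x : G => (((χG x : ℝ≥0∞)) ^ 2 * B (x * g * x⁻¹)).toReal :=
      ENNReal.summable_toReal hBfin
    refine Summable.of_nonneg_of_le (fun x => norm_nonneg _) (fun x => ?_) hb
    rcases eq_or_ne (χG x) 0 with h0 | h0
    · simp [h0, ENNReal.toReal_nonneg]
    · have hterm : ((χG x : ℝ≥0∞)) ^ 2 * B (x * g * x⁻¹) ≠ ⊤ :=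
        ne_top_of_le_ne_top hBfin (ENNReal.le_tsum x)
      have hBx : B (x * g * x⁻¹) ≠ ⊤ := by
        intro hT
        apply hterm
        rw [hT, ENNReal.mul_top]
        simpa using pow_ne_zero 2 (by exact_mod_cast h0 : (χG x : ℝ≥0∞) ≠ 0)
      calc ‖(((χG x : ℝ) : ℂ)) ^ 2 * Ic (x * g * x⁻¹)‖
          = ((χG x : ℝ)) ^ 2 * ‖Ic (x * g * x⁻¹)‖ := by
            rw [norm_mul, norm_pow, Complex.norm_real, Real.norm_of_nonneg (χG x).coe_nonneg]
        _ ≤ ((χG x : ℝ)) ^ 2 * (B (x * g * x⁻¹)).toReal :=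
            mul_le_mul_of_nonneg_left (hIcnorm _) (by positivity)
        _ = (((χG x : ℝ≥0∞)) ^ 2 * B (x * g * x⁻¹)).toReal := by
            rw [ENNReal.toReal_mul, ENNReal.toReal_pow, ENNReal.coe_toReal]
  -- regroup the complex sum over fibers
  have regroupc : ∑' x : G, (((χG x : ℝ) : ℂ)) ^ 2 * Ic (x * g * x⁻¹)
      = ∑' k : K, Ic (k : G) := by
    have hsig : Summable ((fun x : G => (((χG x : ℝ) : ℂ)) ^ 2 * Ic (x * g * x⁻¹))
        ∘ (Equiv.sigmaFiberEquiv q)) :=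
      (Equiv.sigmaFiberEquiv q).summable_iff.2 csummable
    calc ∑' x : G, (((χG x : ℝ) : ℂ)) ^ 2 * Ic (x * g * x⁻¹)
        = ∑' p : (Σ k : K, {x : G // q x = k}),
            (((χG ((Equiv.sigmaFiberEquiv q) p : G) : ℝ) : ℂ)) ^ 2
              * Ic (((Equiv.sigmaFiberEquiv q) p : G) * g
                * ((Equiv.sigmaFiberEquiv q) p : G)⁻¹) :=
          ((Equiv.sigmaFiberEquiv q).tsum_eq _).symm
      _ = ∑' k : K, ∑' x : {x : G // q x = k},
            (((χG (x : G) : ℝ) : ℂ)) ^ 2 * Ic ((x : G) * g * (x : G)⁻¹) :=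
          hsig.tsum_sigma
      _ = ∑' k : K, Ic (k : G) := by
          refine tsum_congr fun k => ?_
          have fib1 : HasSum (fun x : {x : G // q x = k} => (((χG (x : G) : ℝ) : ℂ)) ^ 2)
              (1 : ℂ) := by
            have h := hasSum_ofNNReal_complex
              (v := fun x : {x : G // q x = k} => (χG (x : G)) ^ 2) (r := 1)
              (by push_cast; exact fiber_equiv k)
            simpa using h
          calc ∑' x : {x : G // q x = k},
                (((χG (x : G) : ℝ) : ℂ)) ^ 2 * Ic ((x : G) * g * (x : G)⁻¹)
              = ∑' x : {x : G // q x = k}, (((χG (x : G) : ℝ) : ℂ)) ^ 2 * Ic (k : G) :=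
                tsum_congr fun x => by rw [fiber_B k x]
            _ = (∑' x : {x : G // q x = k}, (((χG (x : G) : ℝ) : ℂ)) ^ 2) * Ic (k : G) :=
                tsum_mul_right
            _ = Ic (k : G) := by rw [fib1.tsum_eq, one_mul]
  -- identify the right-hand side
  have rhs_eq : (∫ m, (((χg m : ℝ) : ℂ)) ^ 2 * κ (g⁻¹ • m, m) ∂μ)
      = ∑' x : G, (((χG x : ℝ) : ℂ)) ^ 2 * Ic (x * g * x⁻¹) := by
    calc (∫ m, (((χg m : ℝ) : ℂ)) ^ 2 * κ (g⁻¹ • m, m) ∂μ)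
        = ∫ m, ∑' x : G, F x m ∂μ := by
          refine integral_congr_ae (Filter.Eventually.of_forall fun m => ?_)
          simp only
          rw [← (ptws m).tsum_eq, ← tsum_mul_right]
      _ = ∑' x : G, ∫ m, F x m ∂μ := integral_tsum Fmeas Ffin
      _ = ∑' x : G, (((χG x : ℝ) : ℂ)) ^ 2 * Ic (x * g * x⁻¹) := by
          refine tsum_congr fun x => ?_
          rw [← step2c x]
          simp only [hF, mul_assoc]
          rw [integral_const_mul]
  calc ∑' k : K, ∫ m, (((χ ((k : G) • m) : ℝ) : ℂ)) ^ 2 * κ ((k : G)⁻¹ • m, m) ∂μ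
      = ∑' k : K, Ic (k : G) := tsum_congr fun k => step1c (k : G)
    _ = ∑' x : G, (((χG x : ℝ) : ℂ)) ^ 2 * Ic (x * g * x⁻¹) := regroupc.symm
    _ = ∫ m, (((χg m : ℝ) : ℂ)) ^ 2 * κ (g⁻¹ • m, m) ∂μ := rhs_eq.symm
end

section
/- Let G be a countable discrete group acting measurably on an s-finite measure space (M, μ) such that μ is invariant under every element of G. Let g ∈ G and let Z be its centralizer. Let χ_g : M → [0,∞) be measurable with ∑_{z∈Z} χ_g(z·m)² = 1 for all m ∈ M. Let κ_S, κ_T : M × M → ℂ be measurable and G-invariant, i.e. κ(x·m, x·m') = κ(m, m') for all x ∈ G and m, m' ∈ M. If ∫_M ∫_M χ_g(m)² |κ_S(g⁻¹·m, n)| |κ_T(n, m)| dμ(n) dμ(m) < ∞, then ∫_M ∫_M |κ_S(g⁻¹·m, n)| χ_g(n)² |κ_T(n, m)| dμ(n) dμ(m) < ∞ as well, and ∫_M ∫_M χ_g(m)² κ_S(g⁻¹·m, n) κ_T(n, m) dμ(n) dμ(m) = ∫_M ∫_M κ_S(g⁻¹·m, n) χ_g(n)² κ_T(n, m) dμ(n)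 dμ(m). -/
open scoped ENNReal NNReal
open MeasureTheory

/-- Auxiliary: the action of a group element as a measurable equivalence. -/
def smulMeasurableEquiv {G M : Type*} [Group G] [MulAction G M] [MeasurableSpace M]
    (hmeas : ∀ x : G, Measurable fun m : M => x • m) (z : G) : M ≃ᵐ M where
  toFun := fun m => z • m
  invFun := fun m => z⁻¹ • m
  left_inv := fun m => inv_smul_smul z m
  right_inv := fun m => smul_inv_smul z m
  measurable_toFun := hmeas z
  measurable_invFun := hmeas z⁻¹

/-- Trace property of the `g`-trace (scalar-kernel, discrete-group case):
for a countable discrete group `G` acting measurably on an s-finite measure space `(M, μ)`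
preserving `μ`, a cutoff function `χ_g` for the action of the centraliser `Z` of `g` on `M`,
and `G`-invariant kernels `κ_S`, `κ_T`: if the double integral of
`χ_g(m)² |κ_S(g⁻¹·m, n)| |κ_T(n, m)|` is finite, then so is the double integral of
`|κ_S(g⁻¹·m, n)| χ_g(n)² |κ_T(n, m)|`, and the corresponding double integrals without
absolute values are equal. -/
theorem gTrace_trace_property
    {G M : Type*} [Group G] [Countable G] [MulAction G M] [MeasurableSpace M]
    (μ : Measure M) [SFinite μ]
    (hmeas : ∀ x : G, Measurable fun m : M => x • m)
    (hinv : ∀ x : G, MeasurePreserving (fun m : M => x • m) μ μ)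
    (g : G)
    (χg : M → ℝ≥0) (hχgmeas : Measurable χg)
    (hχg : ∀ m : M, ∑' z : Subgroup.centralizer ({g} : Set G),
      ((χg ((z : G) • m) : ℝ≥0∞)) ^ 2 = 1)
    (κS κT : M × M → ℂ) (hSmeas : Measurable κS) (hTmeas : Measurable κT)
    (hSinv : ∀ (x : G) (m m' : M), κS (x • m, x • m') = κS (m, m'))
    (hTinv : ∀ (x : G) (m m' : M), κT (x • m, x • m') = κT (m, m'))
    (hfin : ∫⁻ m, ∫⁻ n, ((χg m : ℝ≥0∞)) ^ 2 * (‖κS (g⁻¹ • m, n)‖₊ : ℝ≥0∞)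
        * (‖κT (n, m)‖₊ : ℝ≥0∞) ∂μ ∂μ < ⊤) :
    (∫⁻ m, ∫⁻ n, (‖κS (g⁻¹ • m, n)‖₊ : ℝ≥0∞) * ((χg n : ℝ≥0∞)) ^ 2
        * (‖κT (n, m)‖₊ : ℝ≥0∞) ∂μ ∂μ < ⊤) ∧
    ∫ m, ∫ n, (((χg m : ℝ) : ℂ)) ^ 2 * κS (g⁻¹ • m, n) * κT (n, m) ∂μ ∂μ
      = ∫ m, ∫ n, κS (g⁻¹ • m, n) * (((χg n : ℝ) : ℂ)) ^ 2 * κT (n, m) ∂μ ∂μ := by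
  classical
  set Z := Subgroup.centralizer ({g} : Set G) with hZdef
  set ν : Measure (M × M) := μ.prod μ with hνdef
  -- commutation facts
  have hcomm : ∀ z : Z, ∀ m : M, g⁻¹ • ((z : G)⁻¹ • m) = (z : G)⁻¹ • (g⁻¹ • m) := by
    intro z m
    have hz : g * (z : G) = (z : G) * g :=
      Subgroup.mem_centralizer_iff.mp z.2 g rfl
    have h : g⁻¹ * (z : G)⁻¹ = (z : G)⁻¹ * g⁻¹ := by
      rw [← mul_inv_rev, ← mul_inv_rev, hz]
    rw [← mul_smul, ← mul_smul, h]
  -- the measurable equivalences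
  set eM : G → M ≃ᵐ M := smulMeasurableEquiv hmeas with heM
  set e : G → (M × M) ≃ᵐ (M × M) := fun z => (eM z).prodCongr (eM z) with he
  have hePres : ∀ z : G, MeasurePreserving (e z) ν ν := fun z =>
    (hinv z).prod (hinv z)
  -- measurability of kernels in the relevant form
  have mS : Measurable fun p : M × M => κS (g⁻¹ • p.1, p.2) :=
    hSmeas.comp (((hmeas g⁻¹).comp measurable_fst).prodMk measurable_snd)
  have mT : Measurable fun p : M × M => κT (p.2, p.1) :=
    hTmeas.comp (measurable_snd.prodMk measurable_fst)
  have mχ : Measurable fun m : M => ((χg m : ℝ≥0∞)) ^ 2 :=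
    (measurable_coe_nnreal_ennreal.comp hχgmeas).pow_const 2
  -- main ℝ≥0∞ functions
  set A : M × M → ℝ≥0∞ := fun p =>
    ((χg p.1 : ℝ≥0∞)) ^ 2 * (‖κS (g⁻¹ • p.1, p.2)‖₊ : ℝ≥0∞) * (‖κT (p.2, p.1)‖₊ : ℝ≥0∞)
    with hAdef
  set B : M × M → ℝ≥0∞ := fun p =>
    (‖κS (g⁻¹ • p.1, p.2)‖₊ : ℝ≥0∞) * ((χg p.2 : ℝ≥0∞)) ^ 2 * (‖κT (p.2, p.1)‖₊ : ℝ≥0∞)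
    with hBdef
  have mA : Measurable A := ((mχ.comp measurable_fst).mul mS.nnnorm.coe_nnreal_ennreal).mul mT.nnnorm.coe_nnreal_ennreal
  have mB : Measurable B := (mS.nnnorm.coe_nnreal_ennreal.mul (mχ.comp measurable_snd)).mul mT.nnnorm.coe_nnreal_ennreal
  -- Tonelli
  have hAint : ∫⁻ p, A p ∂ν = ∫⁻ m, ∫⁻ n, ((χg m : ℝ≥0∞)) ^ 2 * (‖κS (g⁻¹ • m, n)‖₊ : ℝ≥0∞)
      * (‖κT (n, m)‖₊ : ℝ≥0∞) ∂μ ∂μ := lintegral_prod A mA.aemeasurable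
  have hBint : ∫⁻ p, B p ∂ν = ∫⁻ m, ∫⁻ n, (‖κS (g⁻¹ • m, n)‖₊ : ℝ≥0∞) * ((χg n : ℝ≥0∞)) ^ 2
      * (‖κT (n, m)‖₊ : ℝ≥0∞) ∂μ ∂μ := lintegral_prod B mB.aemeasurable
  -- key kernel-invariance rewrites
  have hSkey : ∀ z : Z, ∀ q : M × M,
      κS (g⁻¹ • ((z : G)⁻¹ • q.1), (z : G)⁻¹ • q.2) = κS (g⁻¹ • q.1, q.2) := by
    intro z q
    rw [hcomm z q.1]
    have := hSinv (z : G) ((z : G)⁻¹ • (g⁻¹ • q.1)) ((z : G)⁻¹ • q.2)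
    rw [smul_inv_smul, smul_inv_smul] at this
    exact this.symm
  have hTkey : ∀ z : Z, ∀ q : M × M,
      κT ((z : G)⁻¹ • q.2, (z : G)⁻¹ • q.1) = κT (q.2, q.1) := by
    intro z q
    have := hTinv (z : G) ((z : G)⁻¹ • q.2) ((z : G)⁻¹ • q.1)
    rw [smul_inv_smul, smul_inv_smul] at this
    exact this.symm
  -- the inverse-reindexed partition of unity
  have hχg' : ∀ m : M, ∑' z : Z, ((χg ((z : G)⁻¹ • m) : ℝ≥0∞)) ^ 2 = 1 := by
    intro m
    have h2 := (Equiv.inv Z).tsum_eq (fun z : Z => ((χg ((z : G) • m) : ℝ≥0∞)) ^ 2)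
    rw [hχg m] at h2
    simpa using h2
  -- Part 1: lintegral identity
  have mterm1 : ∀ z : Z,
      Measurable fun p : M × M => A p * ((χg ((z : G) • p.2) : ℝ≥0∞)) ^ 2 :=
    fun z => mA.mul (mχ.comp ((hmeas (z : G)).comp measurable_snd))
  have mterm2 : ∀ z : Z,
      Measurable fun q : M × M => ((χg ((z : G)⁻¹ • q.1) : ℝ≥0∞)) ^ 2 * B q :=
    fun z => (mχ.comp ((hmeas (z : G)⁻¹).comp measurable_fst)).mul mB
  have lstep1 : ∫⁻ p, A p ∂ν
      = ∑' z : Z, ∫⁻ p, A p * ((χg ((z : G) • p.2) : ℝ≥0∞)) ^ 2 ∂ν := by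
    rw [← lintegral_tsum (fun z : Z => (mterm1 z).aemeasurable)]
    refine lintegral_congr fun p => ?_
    rw [ENNReal.tsum_mul_left, hχg p.2, mul_one]
  have lstep2 : ∀ z : Z, ∫⁻ p, A p * ((χg ((z : G) • p.2) : ℝ≥0∞)) ^ 2 ∂ν
      = ∫⁻ q, ((χg ((z : G)⁻¹ • q.1) : ℝ≥0∞)) ^ 2 * B q ∂ν := by
    intro z
    rw [← (hePres (z : G)⁻¹).lintegral_comp_emb (e (z : G)⁻¹).measurableEmbedding
      (fun p => A p * ((χg ((z : G) • p.2) : ℝ≥0∞)) ^ 2)]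
    refine lintegral_congr fun q => ?_
    show A ((z : G)⁻¹ • q.1, (z : G)⁻¹ • q.2)
        * ((χg ((z : G) • ((z : G)⁻¹ • q.2)) : ℝ≥0∞)) ^ 2 = _
    rw [smul_inv_smul]
    show ((χg ((z : G)⁻¹ • q.1) : ℝ≥0∞)) ^ 2
        * (‖κS (g⁻¹ • ((z : G)⁻¹ • q.1), (z : G)⁻¹ • q.2)‖₊ : ℝ≥0∞)
        * (‖κT ((z : G)⁻¹ • q.2, (z : G)⁻¹ • q.1)‖₊ : ℝ≥0∞)
        * ((χg q.2 : ℝ≥0∞)) ^ 2 = _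
    rw [hSkey z q, hTkey z q]
    show _ = ((χg ((z : G)⁻¹ • q.1) : ℝ≥0∞)) ^ 2 * ((‖κS (g⁻¹ • q.1, q.2)‖₊ : ℝ≥0∞)
        * ((χg q.2 : ℝ≥0∞)) ^ 2 * (‖κT (q.2, q.1)‖₊ : ℝ≥0∞))
    ring
  have lstep3 : ∑' z : Z, ∫⁻ q, ((χg ((z : G)⁻¹ • q.1) : ℝ≥0∞)) ^ 2 * B q ∂ν
      = ∫⁻ q, B q ∂ν := by
    rw [← lintegral_tsum (fun z : Z => (mterm2 z).aemeasurable)]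
    refine lintegral_congr fun q => ?_
    rw [ENNReal.tsum_mul_right, hχg' q.1, one_mul]
  have hlin : ∫⁻ p, A p ∂ν = ∫⁻ p, B p ∂ν := by
    rw [lstep1, tsum_congr lstep2, lstep3]
  have hAfin : ∫⁻ p, A p ∂ν < ⊤ := by rw [hAint]; exact hfin
  have hBfin : ∫⁻ p, B p ∂ν < ⊤ := by rw [← hlin]; exact hAfin
  refine ⟨by rw [← hBint]; exact hBfin, ?_⟩
  -- Part 2: Bochner version
  -- complex partition of unity
  have hsumC : ∀ m : M, HasSum (fun z : Z => (((χg ((z : G) • m) : ℝ) : ℂ)) ^ 2) 1 := by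
    intro m
    have h1 : HasSum (fun z : Z => ((χg ((z : G) • m) : ℝ≥0∞)) ^ 2) 1 := by
      have := ENNReal.summable.hasSum
        (f := fun z : Z => ((χg ((z : G) • m) : ℝ≥0∞)) ^ 2)
      rwa [hχg m] at this
    have h2 : HasSum (fun z : Z => (χg ((z : G) • m)) ^ 2) 1 := by
      rw [← ENNReal.hasSum_coe (r := 1)]
      simpa [ENNReal.coe_pow] using h1
    have h3 : HasSum (fun z : Z => ((χg ((z : G) • m) : ℝ)) ^ 2) 1 := by
      have := NNReal.hasSum_coe.mpr h2
      simpa [NNReal.coe_pow] using this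
    have h4 := Complex.hasSum_ofReal.mpr h3
    simpa using h4
  have hsumC' : ∀ m : M, HasSum (fun z : Z => (((χg ((z : G)⁻¹ • m) : ℝ) : ℂ)) ^ 2) 1 := by
    intro m
    have := ((Equiv.inv Z).hasSum_iff).mpr (hsumC m)
    simpa [Function.comp_def] using this
  -- complex functions
  set F : M × M → ℂ := fun p =>
    (((χg p.1 : ℝ) : ℂ)) ^ 2 * κS (g⁻¹ • p.1, p.2) * κT (p.2, p.1) with hFdef
  set Gf : M × M → ℂ := fun p =>
    κS (g⁻¹ • p.1, p.2) * (((χg p.2 : ℝ) : ℂ)) ^ 2 * κT (p.2, p.1) with hGdef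
  have mc : Measurable fun m : M => (((χg m : ℝ) : ℂ)) ^ 2 :=
    (Complex.measurable_ofReal.comp (measurable_coe_nnreal_real.comp hχgmeas)).pow_const 2
  have mF : Measurable F := ((mc.comp measurable_fst).mul mS).mul mT
  have mG : Measurable Gf := (mS.mul (mc.comp measurable_snd)).mul mT
  have hcnorm : ∀ m : M, (‖(((χg m : ℝ) : ℂ)) ^ 2‖₊ : ℝ≥0∞) = ((χg m : ℝ≥0∞)) ^ 2 := by
    intro m
    simp [nnnorm_pow, NNReal.nnnorm_eq]
  have hFnorm : ∀ p : M × M, (‖F p‖₊ : ℝ≥0∞) = A p := by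
    intro p
    show (‖(((χg p.1 : ℝ) : ℂ)) ^ 2 * κS (g⁻¹ • p.1, p.2) * κT (p.2, p.1)‖₊ : ℝ≥0∞) = _
    rw [nnnorm_mul, nnnorm_mul, ENNReal.coe_mul, ENNReal.coe_mul, hcnorm]
  have hGnorm : ∀ p : M × M, (‖Gf p‖₊ : ℝ≥0∞) = B p := by
    intro p
    show (‖κS (g⁻¹ • p.1, p.2) * (((χg p.2 : ℝ) : ℂ)) ^ 2 * κT (p.2, p.1)‖₊ : ℝ≥0∞) = _
    rw [nnnorm_mul, nnnorm_mul, ENNReal.coe_mul, ENNReal.coe_mul, hcnorm]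
  have hFi : Integrable F ν := by
    refine ⟨mF.aestronglyMeasurable, ?_⟩
    show ∫⁻ p, (‖F p‖₊ : ℝ≥0∞) ∂ν < ⊤
    rw [lintegral_congr hFnorm]
    exact hAfin
  have hGi : Integrable Gf ν := by
    refine ⟨mG.aestronglyMeasurable, ?_⟩
    show ∫⁻ p, (‖Gf p‖₊ : ℝ≥0∞) ∂ν < ⊤
    rw [lintegral_congr hGnorm]
    exact hBfin
  -- main identity on the product
  have mFterm : ∀ z : Z,
      Measurable fun p : M × M => F p * (((χg ((z : G) • p.2) : ℝ) : ℂ)) ^ 2 :=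
    fun z => mF.mul (mc.comp ((hmeas (z : G)).comp measurable_snd))
  have mGterm : ∀ z : Z,
      Measurable fun q : M × M => (((χg ((z : G)⁻¹ • q.1) : ℝ) : ℂ)) ^ 2 * Gf q :=
    fun z => (mc.comp ((hmeas (z : G)⁻¹).comp measurable_fst)).mul mG
  have cFnorm : ∀ z : Z, ∀ p : M × M,
      (‖F p * (((χg ((z : G) • p.2) : ℝ) : ℂ)) ^ 2‖₊ : ℝ≥0∞)
        = A p * ((χg ((z : G) • p.2) : ℝ≥0∞)) ^ 2 := by
    intro z p
    rw [nnnorm_mul, ENNReal.coe_mul, hFnorm, hcnorm]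
  have cGnorm : ∀ z : Z, ∀ q : M × M,
      (‖(((χg ((z : G)⁻¹ • q.1) : ℝ) : ℂ)) ^ 2 * Gf q‖₊ : ℝ≥0∞)
        = ((χg ((z : G)⁻¹ • q.1) : ℝ≥0∞)) ^ 2 * B q := by
    intro z q
    rw [nnnorm_mul, ENNReal.coe_mul, hGnorm, hcnorm]
  have cstep1 : ∫ p, F p ∂ν
      = ∑' z : Z, ∫ p, F p * (((χg ((z : G) • p.2) : ℝ) : ℂ)) ^ 2 ∂ν := by
    rw [← integral_tsum (fun z : Z => (mFterm z).aestronglyMeasurable) ?_]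
    · refine integral_congr_ae (Filter.EventuallyEq.of_eq (funext fun p => ?_))
      rw [tsum_mul_left, (hsumC p.2).tsum_eq, mul_one]
    · have : ∀ z : Z, ∫⁻ p, (‖F p * (((χg ((z : G) • p.2) : ℝ) : ℂ)) ^ 2‖₊ : ℝ≥0∞) ∂ν
          = ∫⁻ p, A p * ((χg ((z : G) • p.2) : ℝ≥0∞)) ^ 2 ∂ν :=
        fun z => lintegral_congr (cFnorm z)
      refine ne_of_eq_of_ne (tsum_congr this) ?_
      rw [← lstep1]
      exact hAfin.ne
  have cstep2 : ∀ z : Z, ∫ p, F p * (((χg ((z : G) • p.2) : ℝ) : ℂ)) ^ 2 ∂ν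
      = ∫ q, (((χg ((z : G)⁻¹ • q.1) : ℝ) : ℂ)) ^ 2 * Gf q ∂ν := by
    intro z
    rw [← (hePres (z : G)⁻¹).integral_comp (e (z : G)⁻¹).measurableEmbedding
      (fun p => F p * (((χg ((z : G) • p.2) : ℝ) : ℂ)) ^ 2)]
    refine integral_congr_ae (Filter.EventuallyEq.of_eq (funext fun q => ?_))
    show F ((z : G)⁻¹ • q.1, (z : G)⁻¹ • q.2)
        * (((χg ((z : G) • ((z : G)⁻¹ • q.2)) : ℝ) : ℂ)) ^ 2 = _
    rw [smul_inv_smul]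
    show (((χg ((z : G)⁻¹ • q.1) : ℝ) : ℂ)) ^ 2
        * κS (g⁻¹ • ((z : G)⁻¹ • q.1), (z : G)⁻¹ • q.2)
        * κT ((z : G)⁻¹ • q.2, (z : G)⁻¹ • q.1)
        * (((χg q.2 : ℝ) : ℂ)) ^ 2 = _
    rw [hSkey z q, hTkey z q]
    show _ = (((χg ((z : G)⁻¹ • q.1) : ℝ) : ℂ)) ^ 2 * (κS (g⁻¹ • q.1, q.2)
        * (((χg q.2 : ℝ) : ℂ)) ^ 2 * κT (q.2, q.1))
    ring
  have cstep3 : ∑' z : Z, ∫ q, (((χg ((z : G)⁻¹ • q.1) : ℝ) : ℂ)) ^ 2 * Gf q ∂ν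
      = ∫ q, Gf q ∂ν := by
    rw [← integral_tsum (fun z : Z => (mGterm z).aestronglyMeasurable) ?_]
    · refine integral_congr_ae (Filter.EventuallyEq.of_eq (funext fun q => ?_))
      rw [tsum_mul_right, (hsumC' q.1).tsum_eq, one_mul]
    · have : ∀ z : Z, ∫⁻ q, (‖(((χg ((z : G)⁻¹ • q.1) : ℝ) : ℂ)) ^ 2 * Gf q‖₊ : ℝ≥0∞) ∂ν
          = ∫⁻ q, ((χg ((z : G)⁻¹ • q.1) : ℝ≥0∞)) ^ 2 * B q ∂ν :=
        fun z => lintegral_congr (cGnorm z)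
      refine ne_of_eq_of_ne (tsum_congr this) ?_
      rw [lstep3]
      exact hBfin.ne
  have hmain : ∫ p, F p ∂ν = ∫ p, Gf p ∂ν := by
    rw [cstep1, tsum_congr cstep2, cstep3]
  -- Fubini on both sides
  have hF2 : ∫ m, ∫ n, (((χg m : ℝ) : ℂ)) ^ 2 * κS (g⁻¹ • m, n) * κT (n, m) ∂μ ∂μ
      = ∫ p, F p ∂ν :=
    integral_integral (f := fun m n => (((χg m : ℝ) : ℂ)) ^ 2 * κS (g⁻¹ • m, n) * κT (n, m)) hFi
  have hG2 : ∫ m, ∫ n, κS (g⁻¹ • m, n) * (((χg n : ℝ) : ℂ)) ^ 2 * κT (n, m) ∂μ ∂μ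
      = ∫ p, Gf p ∂ν :=
    integral_integral (f := fun m n => κS (g⁻¹ • m, n) * (((χg n : ℝ) : ℂ)) ^ 2 * κT (n, m)) hGi
  rw [hF2, hG2, hmain]
end

section
/- Let G be a countable discrete group acting by homeomorphisms on a locally compact Hausdorff space M, and let μ be a G-invariant Borel measure on M. Let χ : M → [0,∞) be continuous with compact support K such that μ(K) < ∞ and ∑_{x∈G} χ(x·m)² = 1 for all m ∈ M. Call a continuous G-invariant kernel κ : M × M → ℂ admissible if for all m₁, m₂ ∈ M the function F_κ(m₁,m₂) : G → ℂ, x ↦ κ(x⁻¹·m₁, m₂), is summable, and the map (m₁,m₂) ↦ F_κ(m₁,m₂) is continuous from M × M to ℓ¹(G); for admissible κ set N(κ) := μ(K) · (sup_M χ)² · sup_{(m₁,m₂)∈K×K} ‖F_κ(m₁,m₂)‖_{ℓ¹(G)}. Then for admissible κ and λ: (i) for all m₁, m₂ ∈ M the function n ↦ κ(m₁,n) λ(n,m₂) is μ-integrable, so the composed kernel (κ∘λ)(m₁,m₂) := ∫_M κ(m₁,n) λ(n,m₂) dμ(n) is defined, and it is G-invariant; (ii) F_{κ∘λ}(m₁,m₂)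 is summable for all m₁, m₂; and (iii) N(κ∘λ) ≤ N(κ) · N(λ). -/
open scoped ENNReal NNReal
open MeasureTheory

/-- Submultiplicativity of the norm `N(κ) = μ(K) (sup χ)² sup_{K×K} ‖F_κ‖_{ℓ¹}`
on admissible `G`-invariant kernels over a locally compact Hausdorff `G`-space `M` with
`G`-invariant measure `μ` and cutoff function `χ` with compact support `K`: for admissible
kernels `κ` and `λ`, the composed kernel `(κ∘λ)(m₁,m₂) = ∫ κ(m₁,n) λ(n,m₂) dμ(n)` is defined
and `G`-invariant, its `F`-functions are summable, and `N(κ∘λ) ≤ N(κ) N(λ)`. -/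
theorem kernel_norm_submultiplicative
    {G M : Type*} [Group G] [Countable G]
    [TopologicalSpace M] [LocallyCompactSpace M] [T2Space M]
    [MeasurableSpace M] [BorelSpace M]
    [MulAction G M] (hGcont : ∀ x : G, Continuous fun m : M => x • m)
    (μ : Measure M)
    (hinv : ∀ x : G, MeasurePreserving (fun m : M => x • m) μ μ)
    (χ : M → ℝ≥0) (hχcont : Continuous χ) (hχsupp : HasCompactSupport χ)
    (hK : μ (tsupport χ) < ⊤)
    (hχ : ∀ m : M, ∑' x : G, ((χ (x • m) : ℝ≥0∞)) ^ 2 = 1)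
    (κ lam : M × M → ℂ)
    (hκcont : Continuous κ) (hlamcont : Continuous lam)
    (hκinv : ∀ (x : G) (m m' : M), κ (x • m, x • m') = κ (m, m'))
    (hlaminv : ∀ (x : G) (m m' : M), lam (x • m, x • m') = lam (m, m'))
    (hκmem : ∀ m₁ m₂ : M, Memℓp (fun x : G => κ (x⁻¹ • m₁, m₂)) 1)
    (hlammem : ∀ m₁ m₂ : M, Memℓp (fun x : G => lam (x⁻¹ • m₁, m₂)) 1)
    (hκF : Continuous fun p : M × M =>
      (⟨fun x : G => κ (x⁻¹ • p.1, p.2), hκmem p.1 p.2⟩ : lp (fun _ : G => ℂ) 1))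
    (hlamF : Continuous fun p : M × M =>
      (⟨fun x : G => lam (x⁻¹ • p.1, p.2), hlammem p.1 p.2⟩ : lp (fun _ : G => ℂ) 1)) :
    (∀ m₁ m₂ : M, Integrable (fun n => κ (m₁, n) * lam (n, m₂)) μ) ∧
    (∀ (x : G) (m m' : M),
      ∫ n, κ (x • m, n) * lam (n, x • m') ∂μ = ∫ n, κ (m, n) * lam (n, m') ∂μ) ∧
    (∀ m₁ m₂ : M, Summable fun x : G => ‖∫ n, κ (x⁻¹ • m₁, n) * lam (n, m₂) ∂μ‖) ∧
    (μ (tsupport χ)).toReal * (⨆ m : M, (χ m : ℝ)) ^ 2 *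
        (⨆ p : (tsupport χ ×ˢ tsupport χ : Set (M × M)),
          ∑' x : G, ‖∫ n, κ (x⁻¹ • (p : M × M).1, n) * lam (n, (p : M × M).2) ∂μ‖)
      ≤ ((μ (tsupport χ)).toReal * (⨆ m : M, (χ m : ℝ)) ^ 2 *
          (⨆ p : (tsupport χ ×ˢ tsupport χ : Set (M × M)),
            ∑' x : G, ‖κ (x⁻¹ • (p : M × M).1, (p : M × M).2)‖)) *
        ((μ (tsupport χ)).toReal * (⨆ m : M, (χ m : ℝ)) ^ 2 *
          (⨆ p : (tsupport χ ×ˢ tsupport χ : Set (M × M)),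
            ∑' x : G, ‖lam (x⁻¹ • (p : M × M).1, (p : M × M).2)‖)) := by
  classical
  rcases isEmpty_or_nonempty M with hM | hM
  · refine ⟨fun m₁ => (hM.false m₁).elim, fun x m => (hM.false m).elim,
      fun m₁ => (hM.false m₁).elim, ?_⟩
    have hKe : tsupport χ = (∅ : Set M) := Set.eq_empty_of_isEmpty _
    simp [hKe]
  -- Notation
  set K : Set M := tsupport χ with hKdef
  have hKc : IsCompact K := hχsupp
  have hKmeas : MeasurableSet K := (isClosed_tsupport χ).measurableSet
  have hχm : Measurable fun m : M => (χ m : ℝ≥0∞) :=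
    measurable_coe_nnreal_ennreal.comp hχcont.measurable
  have hsmul : ∀ x : G, Measurable fun m : M => x • m := fun x => (hGcont x).measurable
  have hκcm : ∀ a : M, Continuous fun m : M => κ (a, m) := fun a =>
    hκcont.comp (continuous_const.prodMk continuous_id)
  have hlamcm : ∀ b : M, Continuous fun m : M => lam (m, b) := fun b =>
    hlamcont.comp (continuous_id.prodMk continuous_const)
  -- ℓ¹-type quantities
  set Eκ : M → M → ℝ≥0∞ := fun a m => ∑' z : G, (‖κ (z⁻¹ • a, m)‖₊ : ℝ≥0∞) with hEκdef
  set El : M → M → ℝ≥0∞ := fun m b => ∑' y : G, (‖lam (y⁻¹ • m, b)‖₊ : ℝ≥0∞) with hEldef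
  set J : M → M → ℝ≥0∞ :=
    fun a b => ∫⁻ m, (χ m : ℝ≥0∞) ^ 2 * Eκ a m * El m b ∂μ with hJdef
  have hEκmeas : ∀ a : M, Measurable fun m => Eκ a m := fun a =>
    Measurable.ennreal_tsum fun z => (hκcm (z⁻¹ • a)).measurable.nnnorm.coe_nnreal_ennreal
  have hElmeas : ∀ b : M, Measurable fun m => El m b := fun b =>
    Measurable.ennreal_tsum fun y => ((hlamcm b).comp (hGcont y⁻¹)).measurable.nnnorm.coe_nnreal_ennreal
  -- Partition of unity identity for lower integrals
  have part : ∀ f : M → ℝ≥0∞, Measurable f →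
      ∫⁻ n, f n ∂μ = ∑' x : G, ∫⁻ m, (χ m : ℝ≥0∞) ^ 2 * f (x⁻¹ • m) ∂μ := by
    intro f hf
    have h0 : ∫⁻ n, f n ∂μ = ∫⁻ n, ∑' x : G, (χ (x • n) : ℝ≥0∞) ^ 2 * f n ∂μ :=
      lintegral_congr fun n => by rw [ENNReal.tsum_mul_right, hχ n, one_mul]
    rw [h0, lintegral_tsum fun x : G =>
      (show Measurable fun n : M => (χ (x • n) : ℝ≥0∞) ^ 2 * f n from
        ((hχm.comp (hsmul x)).pow_const 2).mul hf).aemeasurable]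
    refine tsum_congr fun x => ?_
    have hg : Measurable fun m : M => (χ m : ℝ≥0∞) ^ 2 * f (x⁻¹ • m) :=
      (hχm.pow_const 2).mul (hf.comp (hsmul x⁻¹))
    have h2 := (hinv x).lintegral_comp hg
    simp only [inv_smul_smul] at h2
    exact h2
  -- Invariance rewrites
  have hrwκ : ∀ (x y : G) (a m : M), κ (x⁻¹ • a, y⁻¹ • m) = κ ((x * y⁻¹)⁻¹ • a, m) := by
    intro x y a m
    have h3 : y⁻¹ • ((x * y⁻¹)⁻¹ • a) = x⁻¹ • a := by
      rw [smul_smul]; congr 1; group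
    calc κ (x⁻¹ • a, y⁻¹ • m) = κ (y⁻¹ • ((x * y⁻¹)⁻¹ • a), y⁻¹ • m) := by rw [h3]
      _ = κ ((x * y⁻¹)⁻¹ • a, m) := hκinv y⁻¹ _ _
  have hrwκ1 : ∀ (y : G) (a m : M), κ (a, y⁻¹ • m) = κ ((y⁻¹)⁻¹ • a, m) := by
    intro y a m
    have h := hκinv y⁻¹ ((y⁻¹)⁻¹ • a) m
    rw [smul_inv_smul] at h
    exact h
  -- Key identity for a single term
  have keyEq : ∀ (a b : M) (x : G),
      ∫⁻ n, (‖κ (x⁻¹ • a, n)‖₊ : ℝ≥0∞) * (‖lam (n, b)‖₊ : ℝ≥0∞) ∂μ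
        = ∑' y : G, ∫⁻ m, (χ m : ℝ≥0∞) ^ 2 *
            ((‖κ ((x * y⁻¹)⁻¹ • a, m)‖₊ : ℝ≥0∞) * (‖lam (y⁻¹ • m, b)‖₊ : ℝ≥0∞)) ∂μ := by
    intro a b x
    have hf : Measurable fun n : M => (‖κ (x⁻¹ • a, n)‖₊ : ℝ≥0∞) * (‖lam (n, b)‖₊ : ℝ≥0∞) :=
      ((hκcm (x⁻¹ • a)).measurable.nnnorm.coe_nnreal_ennreal).mul ((hlamcm b).measurable.nnnorm.coe_nnreal_ennreal)
    rw [part _ hf]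
    refine tsum_congr fun y => lintegral_congr fun m => ?_
    rw [hrwκ x y a m]
  -- Summing the key identity gives `J`
  have hswap : ∀ a b : M,
      (∑' x : G, ∑' y : G, ∫⁻ m, (χ m : ℝ≥0∞) ^ 2 *
          ((‖κ ((x * y⁻¹)⁻¹ • a, m)‖₊ : ℝ≥0∞) * (‖lam (y⁻¹ • m, b)‖₊ : ℝ≥0∞)) ∂μ)
        = J a b := by
    intro a b
    have hmeas : ∀ x y : G, Measurable fun m : M => (χ m : ℝ≥0∞) ^ 2 *
        ((‖κ ((x * y⁻¹)⁻¹ • a, m)‖₊ : ℝ≥0∞) * (‖lam (y⁻¹ • m, b)‖₊ : ℝ≥0∞)) := fun x y =>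
      (hχm.pow_const 2).mul (((hκcm _).measurable.nnnorm.coe_nnreal_ennreal).mul
        (((hlamcm b).comp (hGcont y⁻¹)).measurable.nnnorm.coe_nnreal_ennreal))
    calc (∑' x : G, ∑' y : G, ∫⁻ m, (χ m : ℝ≥0∞) ^ 2 *
            ((‖κ ((x * y⁻¹)⁻¹ • a, m)‖₊ : ℝ≥0∞) * (‖lam (y⁻¹ • m, b)‖₊ : ℝ≥0∞)) ∂μ)
        = ∑' x : G, ∫⁻ m, ∑' y : G, (χ m : ℝ≥0∞) ^ 2 *
            ((‖κ ((x * y⁻¹)⁻¹ • a, m)‖₊ : ℝ≥0∞) * (‖lam (y⁻¹ • m, b)‖₊ : ℝ≥0∞)) ∂μ :=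
          tsum_congr fun x => (lintegral_tsum fun y => (hmeas x y).aemeasurable).symm
      _ = ∫⁻ m, ∑' x : G, ∑' y : G, (χ m : ℝ≥0∞) ^ 2 *
            ((‖κ ((x * y⁻¹)⁻¹ • a, m)‖₊ : ℝ≥0∞) * (‖lam (y⁻¹ • m, b)‖₊ : ℝ≥0∞)) ∂μ :=
          (lintegral_tsum fun x =>
            (Measurable.ennreal_tsum fun y => hmeas x y).aemeasurable).symm
      _ = J a b := by
          refine lintegral_congr fun m => ?_
          have e1 : ∀ y : G,
              (∑' x : G, (‖κ ((x * y⁻¹)⁻¹ • a, m)‖₊ : ℝ≥0∞)) = Eκ a m := fun y =>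
            Equiv.tsum_eq (Equiv.mulRight y⁻¹) fun z : G => (‖κ (z⁻¹ • a, m)‖₊ : ℝ≥0∞)
          calc (∑' x : G, ∑' y : G, (χ m : ℝ≥0∞) ^ 2 *
                  ((‖κ ((x * y⁻¹)⁻¹ • a, m)‖₊ : ℝ≥0∞) * (‖lam (y⁻¹ • m, b)‖₊ : ℝ≥0∞)))
              = (χ m : ℝ≥0∞) ^ 2 * ∑' x : G, ∑' y : G,
                  (‖κ ((x * y⁻¹)⁻¹ • a, m)‖₊ : ℝ≥0∞) * (‖lam (y⁻¹ • m, b)‖₊ : ℝ≥0∞) := by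
                simp_rw [ENNReal.tsum_mul_left]
            _ = (χ m : ℝ≥0∞) ^ 2 * ∑' y : G, ∑' x : G,
                  (‖κ ((x * y⁻¹)⁻¹ • a, m)‖₊ : ℝ≥0∞) * (‖lam (y⁻¹ • m, b)‖₊ : ℝ≥0∞) := by
                rw [ENNReal.tsum_comm]
            _ = (χ m : ℝ≥0∞) ^ 2 * ∑' y : G, Eκ a m * (‖lam (y⁻¹ • m, b)‖₊ : ℝ≥0∞) := by
                congr 1
                refine tsum_congr fun y => ?_
                rw [ENNReal.tsum_mul_right, e1 y]
            _ = (χ m : ℝ≥0∞) ^ 2 * (Eκ a m * El m b) := by rw [ENNReal.tsum_mul_left]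
            _ = (χ m : ℝ≥0∞) ^ 2 * Eκ a m * El m b := by ring
  -- ℓ¹ bound on the composed kernel
  have hsum3 : ∀ a b : M,
      (∑' x : G, (‖∫ n, κ (x⁻¹ • a, n) * lam (n, b) ∂μ‖₊ : ℝ≥0∞)) ≤ J a b := by
    intro a b
    calc (∑' x : G, (‖∫ n, κ (x⁻¹ • a, n) * lam (n, b) ∂μ‖₊ : ℝ≥0∞))
        ≤ ∑' x : G, ∫⁻ n, (‖κ (x⁻¹ • a, n)‖₊ : ℝ≥0∞) * (‖lam (n, b)‖₊ : ℝ≥0∞) ∂μ := by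
          refine ENNReal.tsum_le_tsum fun x => ?_
          have h := enorm_integral_le_lintegral_enorm (μ := μ)
            (fun n => κ (x⁻¹ • a, n) * lam (n, b))
          simp only [enorm_mul] at h
          exact h
      _ = ∑' x : G, ∑' y : G, ∫⁻ m, (χ m : ℝ≥0∞) ^ 2 *
            ((‖κ ((x * y⁻¹)⁻¹ • a, m)‖₊ : ℝ≥0∞) * (‖lam (y⁻¹ • m, b)‖₊ : ℝ≥0∞)) ∂μ :=
          tsum_congr fun x => keyEq a b x
      _ = J a b := hswap a b
  -- Bound for the integrand of the composed kernel
  have hint1 : ∀ a b : M,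
      ∫⁻ n, (‖κ (a, n) * lam (n, b)‖₊ : ℝ≥0∞) ∂μ ≤ J a b := by
    intro a b
    have hf : Measurable fun n : M => (‖κ (a, n) * lam (n, b)‖₊ : ℝ≥0∞) :=
      ((hκcm a).mul (hlamcm b)).measurable.nnnorm.coe_nnreal_ennreal
    rw [part _ hf]
    have hmeas2 : ∀ y : G, Measurable fun m : M =>
        (χ m : ℝ≥0∞) ^ 2 * (Eκ a m * (‖lam (y⁻¹ • m, b)‖₊ : ℝ≥0∞)) := fun y =>
      (hχm.pow_const 2).mul ((hEκmeas a).mul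
        (((hlamcm b).comp (hGcont y⁻¹)).measurable.nnnorm.coe_nnreal_ennreal))
    calc (∑' y : G, ∫⁻ m, (χ m : ℝ≥0∞) ^ 2 * (‖κ (a, y⁻¹ • m) * lam (y⁻¹ • m, b)‖₊ : ℝ≥0∞) ∂μ)
        ≤ ∑' y : G, ∫⁻ m, (χ m : ℝ≥0∞) ^ 2 * (Eκ a m * (‖lam (y⁻¹ • m, b)‖₊ : ℝ≥0∞)) ∂μ := by
          refine ENNReal.tsum_le_tsum fun y => lintegral_mono fun m => ?_
          refine mul_le_mul_right ?_ _
          rw [nnnorm_mul, ENNReal.coe_mul]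
          refine mul_le_mul_left ?_ _
          rw [hrwκ1 y a m]
          exact ENNReal.le_tsum y⁻¹
      _ = ∫⁻ m, ∑' y : G, (χ m : ℝ≥0∞) ^ 2 * (Eκ a m * (‖lam (y⁻¹ • m, b)‖₊ : ℝ≥0∞)) ∂μ :=
          (lintegral_tsum fun y => (hmeas2 y).aemeasurable).symm
      _ = J a b := by
          refine lintegral_congr fun m => ?_
          simp_rw [ENNReal.tsum_mul_left]
          ring
  -- Real summability facts
  have hκsummable : ∀ a m : M, Summable fun z : G => ‖κ (z⁻¹ • a, m)‖ := by
    intro a m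
    have h := (memℓp_gen_iff (p := 1) (by norm_num)).1 (hκmem a m)
    simpa using h
  have hlamsummable : ∀ a m : M, Summable fun z : G => ‖lam (z⁻¹ • a, m)‖ := by
    intro a m
    have h := (memℓp_gen_iff (p := 1) (by norm_num)).1 (hlammem a m)
    simpa using h
  have hκnorm : ∀ a m : M,
      ‖(⟨fun x : G => κ (x⁻¹ • a, m), hκmem a m⟩ : lp (fun _ : G => ℂ) 1)‖
        = ∑' z : G, ‖κ (z⁻¹ • a, m)‖ := by
    intro a m
    have h := lp.norm_eq_tsum_rpow (p := 1) (by norm_num)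
      (⟨fun x : G => κ (x⁻¹ • a, m), hκmem a m⟩ : lp (fun _ : G => ℂ) 1)
    simpa using h
  have hlamnorm : ∀ a m : M,
      ‖(⟨fun x : G => lam (x⁻¹ • a, m), hlammem a m⟩ : lp (fun _ : G => ℂ) 1)‖
        = ∑' z : G, ‖lam (z⁻¹ • a, m)‖ := by
    intro a m
    have h := lp.norm_eq_tsum_rpow (p := 1) (by norm_num)
      (⟨fun x : G => lam (x⁻¹ • a, m), hlammem a m⟩ : lp (fun _ : G => ℂ) 1)
    simpa using h
  have hEκeq : ∀ a m : M, Eκ a m = ENNReal.ofReal (∑' z : G, ‖κ (z⁻¹ • a, m)‖) := by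
    intro a m
    rw [ENNReal.ofReal_tsum_of_nonneg (fun z => norm_nonneg _) (hκsummable a m)]
    exact tsum_congr fun z => (ofReal_norm _).symm
  have hEleq : ∀ a m : M, El a m = ENNReal.ofReal (∑' z : G, ‖lam (z⁻¹ • a, m)‖) := by
    intro a m
    rw [ENNReal.ofReal_tsum_of_nonneg (fun z => norm_nonneg _) (hlamsummable a m)]
    exact tsum_congr fun z => (ofReal_norm _).symm
  -- sup of χ
  have hχrc : Continuous fun m : M => (χ m : ℝ) := NNReal.continuous_coe.comp hχcont
  have hχrsupp : HasCompactSupport fun m : M => (χ m : ℝ) :=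
    hχsupp.comp_left (g := NNReal.toReal) NNReal.coe_zero
  have hSbdd : BddAbove (Set.range fun m : M => (χ m : ℝ)) :=
    hχrc.bddAbove_range_of_hasCompactSupport hχrsupp
  have hS0 : (0 : ℝ) ≤ ⨆ m : M, (χ m : ℝ) := Real.iSup_nonneg fun m => (χ m).coe_nonneg
  have hχeleS : ∀ m : M, (χ m : ℝ≥0∞) ≤ ENNReal.ofReal (⨆ m : M, (χ m : ℝ)) := by
    intro m
    rw [← ENNReal.ofReal_coe_nnreal]
    exact ENNReal.ofReal_le_ofReal (le_ciSup hSbdd m)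
  -- Generic bound for J
  have hJle : ∀ (a b : M) (Cκ Cl : ℝ), 0 ≤ Cκ → 0 ≤ Cl →
      (∀ m ∈ K, Eκ a m ≤ ENNReal.ofReal Cκ) → (∀ m ∈ K, El m b ≤ ENNReal.ofReal Cl) →
      J a b ≤ ENNReal.ofReal ((⨆ m : M, (χ m : ℝ)) ^ 2 * Cκ * Cl) * μ K := by
    intro a b Cκ Cl hCκ0 hCl0 hCκ hCl
    have hb : ∀ m : M, (χ m : ℝ≥0∞) ^ 2 * Eκ a m * El m b
        ≤ K.indicator (fun _ => ENNReal.ofReal ((⨆ m : M, (χ m : ℝ)) ^ 2 * Cκ * Cl)) m := by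
      intro m
      by_cases hm : m ∈ K
      · rw [Set.indicator_of_mem hm,
          ENNReal.ofReal_mul (mul_nonneg (pow_nonneg hS0 2) hCκ0),
          ENNReal.ofReal_mul (pow_nonneg hS0 2), ENNReal.ofReal_pow hS0]
        exact mul_le_mul' (mul_le_mul' (pow_le_pow_left' (hχeleS m) 2) (hCκ m hm)) (hCl m hm)
      · rw [Set.indicator_of_notMem hm]
        have hz : χ m = 0 := image_eq_zero_of_notMem_tsupport hm
        simp [hz]
    calc J a b ≤ ∫⁻ m, K.indicator
          (fun _ => ENNReal.ofReal ((⨆ m : M, (χ m : ℝ)) ^ 2 * Cκ * Cl)) m ∂μ :=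
        lintegral_mono hb
      _ = ENNReal.ofReal ((⨆ m : M, (χ m : ℝ)) ^ 2 * Cκ * Cl) * μ K :=
        lintegral_indicator_const hKmeas _
  -- J is finite
  have hJfin : ∀ a b : M, J a b ≠ ⊤ := by
    intro a b
    obtain ⟨Cκ, hCκ⟩ := hKc.exists_bound_of_continuousOn
      ((hκF.comp (continuous_const.prodMk continuous_id :
        Continuous fun m : M => (a, m))).continuousOn (s := K))
    obtain ⟨Cl, hCl⟩ := hKc.exists_bound_of_continuousOn
      ((hlamF.comp (continuous_id.prodMk continuous_const :
        Continuous fun m : M => (m, b))).continuousOn (s := K))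
    have hbκ : ∀ m ∈ K, Eκ a m ≤ ENNReal.ofReal (max Cκ 0) := by
      intro m hm
      rw [hEκeq a m]
      refine ENNReal.ofReal_le_ofReal ?_
      refine le_trans ?_ (le_max_left _ _)
      rw [← hκnorm a m]
      exact hCκ m hm
    have hbl : ∀ m ∈ K, El m b ≤ ENNReal.ofReal (max Cl 0) := by
      intro m hm
      rw [hEleq m b]
      refine ENNReal.ofReal_le_ofReal ?_
      refine le_trans ?_ (le_max_left _ _)
      rw [← hlamnorm m b]
      exact hCl m hm
    have h := hJle a b (max Cκ 0) (max Cl 0) (le_max_right _ _) (le_max_right _ _) hbκ hbl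
    exact ne_top_of_le_ne_top (ENNReal.mul_ne_top ENNReal.ofReal_ne_top hK.ne) h
  -- Conjunct 1: integrability
  have hIntegrable : ∀ m₁ m₂ : M, Integrable (fun n => κ (m₁, n) * lam (n, m₂)) μ := by
    intro m₁ m₂
    refine ⟨((hκcm m₁).mul (hlamcm m₂)).aestronglyMeasurable, ?_⟩
    exact lt_of_le_of_lt (hint1 m₁ m₂) (lt_top_iff_ne_top.2 (hJfin m₁ m₂))
  refine ⟨hIntegrable, ?_, ?_, ?_⟩
  -- Conjunct 2: invariance
  · intro x m m'
    have hemb : MeasurableEmbedding (fun m : M => x • m) :=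
      (⟨MulAction.toPerm x, hGcont x, hGcont x⁻¹⟩ : M ≃ₜ M).measurableEmbedding
    have h2 := (hinv x).integral_comp hemb (fun n => κ (x • m, n) * lam (n, x • m'))
    calc ∫ n, κ (x • m, n) * lam (n, x • m') ∂μ
        = ∫ n, κ (x • m, x • n) * lam (x • n, x • m') ∂μ := h2.symm
      _ = ∫ n, κ (m, n) * lam (n, m') ∂μ := by simp only [hκinv, hlaminv]
  -- Conjunct 3: summability
  · intro m₁ m₂
    have h := ENNReal.summable_toReal
      (ne_top_of_le_ne_top (hJfin m₁ m₂) (hsum3 m₁ m₂))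
    simpa using h
  -- Conjunct 4: the norm inequality
  · have hKKc : CompactSpace ↥(K ×ˢ K) := isCompact_iff_compactSpace.1 (hKc.prod hKc)
    -- bounded suprema
    have hAκbdd : BddAbove (Set.range fun p : ↥(K ×ˢ K) =>
        ∑' x : G, ‖κ (x⁻¹ • (p : M × M).1, (p : M × M).2)‖) := by
      have hcont : Continuous fun p : ↥(K ×ˢ K) =>
          ‖(⟨fun x : G => κ (x⁻¹ • (p : M × M).1, (p : M × M).2),
            hκmem (p : M × M).1 (p : M × M).2⟩ : lp (fun _ : G => ℂ) 1)‖ :=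
        (hκF.norm).comp continuous_subtype_val
      have heq : (fun p : ↥(K ×ˢ K) =>
          ∑' x : G, ‖κ (x⁻¹ • (p : M × M).1, (p : M × M).2)‖)
          = fun p : ↥(K ×ˢ K) =>
            ‖(⟨fun x : G => κ (x⁻¹ • (p : M × M).1, (p : M × M).2),
              hκmem (p : M × M).1 (p : M × M).2⟩ : lp (fun _ : G => ℂ) 1)‖ :=
        funext fun p => (hκnorm _ _).symm
      rw [heq]
      exact (isCompact_range hcont).bddAbove
    have hAlbdd : BddAbove (Set.range fun p : ↥(K ×ˢ K) =>
        ∑' x : G, ‖lam (x⁻¹ • (p : M × M).1, (p : M × M).2)‖) := by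
      have hcont : Continuous fun p : ↥(K ×ˢ K) =>
          ‖(⟨fun x : G => lam (x⁻¹ • (p : M × M).1, (p : M × M).2),
            hlammem (p : M × M).1 (p : M × M).2⟩ : lp (fun _ : G => ℂ) 1)‖ :=
        (hlamF.norm).comp continuous_subtype_val
      have heq : (fun p : ↥(K ×ˢ K) =>
          ∑' x : G, ‖lam (x⁻¹ • (p : M × M).1, (p : M × M).2)‖)
          = fun p : ↥(K ×ˢ K) =>
            ‖(⟨fun x : G => lam (x⁻¹ • (p : M × M).1, (p : M × M).2),
              hlammem (p : M × M).1 (p : M × M).2⟩ : lp (fun _ : G => ℂ) 1)‖ :=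
        funext fun p => (hlamnorm _ _).symm
      rw [heq]
      exact (isCompact_range hcont).bddAbove
    set S : ℝ := ⨆ m : M, (χ m : ℝ) with hSdef
    set Aκ : ℝ := ⨆ p : ↥(K ×ˢ K),
      ∑' x : G, ‖κ (x⁻¹ • (p : M × M).1, (p : M × M).2)‖ with hAκdef
    set Al : ℝ := ⨆ p : ↥(K ×ˢ K),
      ∑' x : G, ‖lam (x⁻¹ • (p : M × M).1, (p : M × M).2)‖ with hAldef
    set c : ℝ := (μ K).toReal with hcdef
    have hc0 : 0 ≤ c := ENNReal.toReal_nonneg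
    have hAκ0 : 0 ≤ Aκ := Real.iSup_nonneg fun p => tsum_nonneg fun x => norm_nonneg _
    have hAl0 : 0 ≤ Al := Real.iSup_nonneg fun p => tsum_nonneg fun x => norm_nonneg _
    have hAκle : ∀ a b : M, a ∈ K → b ∈ K → (∑' x : G, ‖κ (x⁻¹ • a, b)‖) ≤ Aκ := by
      intro a b ha hb
      exact le_ciSup hAκbdd (⟨(a, b), Set.mk_mem_prod ha hb⟩ : ↥(K ×ˢ K))
    have hAlle : ∀ a b : M, a ∈ K → b ∈ K → (∑' x : G, ‖lam (x⁻¹ • a, b)‖) ≤ Al := by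
      intro a b ha hb
      exact le_ciSup hAlbdd (⟨(a, b), Set.mk_mem_prod ha hb⟩ : ↥(K ×ˢ K))
    -- pointwise bound for the supremum
    have hTp : ∀ p : ↥(K ×ˢ K),
        (∑' x : G, ‖∫ n, κ (x⁻¹ • (p : M × M).1, n) * lam (n, (p : M × M).2) ∂μ‖)
          ≤ S ^ 2 * Aκ * Al * c := by
      rintro ⟨⟨a, b⟩, hp⟩
      have ha : a ∈ K := hp.1
      have hb : b ∈ K := hp.2
      have hbκ : ∀ m ∈ K, Eκ a m ≤ ENNReal.ofReal Aκ := by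
        intro m hm
        rw [hEκeq a m]
        exact ENNReal.ofReal_le_ofReal (hAκle a m ha hm)
      have hbl : ∀ m ∈ K, El m b ≤ ENNReal.ofReal Al := by
        intro m hm
        rw [hEleq m b]
        exact ENNReal.ofReal_le_ofReal (hAlle m b hm hb)
      have h1 : (∑' x : G, (‖∫ n, κ (x⁻¹ • a, n) * lam (n, b) ∂μ‖₊ : ℝ≥0∞))
          ≤ ENNReal.ofReal (S ^ 2 * Aκ * Al) * μ K :=
        (hsum3 a b).trans (hJle a b Aκ Al hAκ0 hAl0 hbκ hbl)
      have h2 := ENNReal.toReal_mono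
        (ENNReal.mul_ne_top ENNReal.ofReal_ne_top hK.ne) h1
      rw [ENNReal.toReal_mul, ENNReal.toReal_ofReal
        (mul_nonneg (mul_nonneg (pow_nonneg hS0 2) hAκ0) hAl0)] at h2
      rw [ENNReal.tsum_toReal_eq (fun x => ENNReal.coe_ne_top)] at h2
      simpa using h2
    have hAcomp : (⨆ p : ↥(K ×ˢ K),
        ∑' x : G, ‖∫ n, κ (x⁻¹ • (p : M × M).1, n) * lam (n, (p : M × M).2) ∂μ‖)
          ≤ S ^ 2 * Aκ * Al * c :=
      Real.iSup_le hTp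
        (mul_nonneg (mul_nonneg (mul_nonneg (pow_nonneg hS0 2) hAκ0) hAl0) hc0)
    calc c * S ^ 2 * (⨆ p : ↥(K ×ˢ K),
          ∑' x : G, ‖∫ n, κ (x⁻¹ • (p : M × M).1, n) * lam (n, (p : M × M).2) ∂μ‖)
        ≤ c * S ^ 2 * (S ^ 2 * Aκ * Al * c) :=
          mul_le_mul_of_nonneg_left hAcomp (mul_nonneg hc0 (pow_nonneg hS0 2))
      _ = (c * S ^ 2 * Aκ) * (c * S ^ 2 * Al) := by ring
end

section
/- Let G be a countable discrete group acting by homeomorphisms on a locally compact Hausdorff space M, and let μ be a G-invariant Borel measure on M. Let χ : M → [0,∞) be continuous with compact support K such that μ(K) < ∞ and ∑_{x∈G} χ(x·m)² = 1 for all m ∈ M. Let κ : M × M → ℂ be a continuous G-invariant kernel such that for all m₁, m₂ ∈ M the function F_κ(m₁,m₂) : G → ℂ, x ↦ κ(x⁻¹·m₁, m₂), is summable, the map (m₁,m₂) ↦ F_κ(m₁,m₂) is continuous from M × M to ℓ¹(G), and N(κ) := μ(K) · (sup_M χ)² · sup_{(m₁,m₂)∈K×K} ‖F_κ(m₁,m₂)‖_{ℓ¹(G)}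 is finite. Define TR(κ) : G → ℂ by TR(κ)(x) = ∫_M χ(x·m)² κ(x⁻¹·m, m) dμ(m). Then for every x ∈ G this integral converges absolutely, TR(κ) is summable, and ‖TR(κ)‖_{ℓ¹(G)} ≤ N(κ). -/
open scoped ENNReal NNReal
open MeasureTheory

/-- The map `TR`, sending an admissible `G`-invariant kernel `κ` to the function
`TR(κ)(x) = ∫ χ(x·m)² κ(x⁻¹·m, m) dμ(m)` on `G`, is well defined (each integral converges
absolutely), takes values in `ℓ¹(G)`, and satisfies `‖TR(κ)‖_{ℓ¹(G)} ≤ N(κ)`, where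
`N(κ) = μ(K) (sup χ)² sup_{K×K} ‖F_κ‖_{ℓ¹}` with `K` the (compact) support of the cutoff `χ`;
finiteness of `N(κ)` is expressed by the boundedness hypothesis `hbdd`. -/
theorem TR_bounded_by_kernel_norm
    {G M : Type*} [Group G] [Countable G]
    [TopologicalSpace M] [LocallyCompactSpace M] [T2Space M]
    [MeasurableSpace M] [BorelSpace M]
    [MulAction G M] (hGcont : ∀ x : G, Continuous fun m : M => x • m)
    (μ : Measure M)
    (hinv : ∀ x : G, MeasurePreserving (fun m : M => x • m) μ μ)
    (χ : M → ℝ≥0) (hχcont : Continuous χ) (hχsupp : HasCompactSupport χ)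
    (hK : μ (tsupport χ) < ⊤)
    (hχ : ∀ m : M, ∑' x : G, ((χ (x • m) : ℝ≥0∞)) ^ 2 = 1)
    (κ : M × M → ℂ) (hκcont : Continuous κ)
    (hκinv : ∀ (x : G) (m m' : M), κ (x • m, x • m') = κ (m, m'))
    (hκmem : ∀ m₁ m₂ : M, Memℓp (fun x : G => κ (x⁻¹ • m₁, m₂)) 1)
    (hκF : Continuous fun p : M × M =>
      (⟨fun x : G => κ (x⁻¹ • p.1, p.2), hκmem p.1 p.2⟩ : lp (fun _ : G => ℂ) 1))
    (hbdd : BddAbove (Set.range fun p : (tsupport χ ×ˢ tsupport χ : Set (M × M)) =>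
      ∑' x : G, ‖κ (x⁻¹ • (p : M × M).1, (p : M × M).2)‖)) :
    (∀ x : G, Integrable (fun m => (((χ (x • m) : ℝ) : ℂ)) ^ 2 * κ (x⁻¹ • m, m)) μ) ∧
    (Summable fun x : G => ‖∫ m, (((χ (x • m) : ℝ) : ℂ)) ^ 2 * κ (x⁻¹ • m, m) ∂μ‖) ∧
    ∑' x : G, ‖∫ m, (((χ (x • m) : ℝ) : ℂ)) ^ 2 * κ (x⁻¹ • m, m) ∂μ‖
      ≤ (μ (tsupport χ)).toReal * (⨆ m : M, (χ m : ℝ)) ^ 2 *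
        (⨆ p : (tsupport χ ×ˢ tsupport χ : Set (M × M)),
          ∑' x : G, ‖κ (x⁻¹ • (p : M × M).1, (p : M × M).2)‖) := by
  classical
  set K : Set M := tsupport χ with hKdef
  set C : ℝ := ⨆ m : M, (χ m : ℝ) with hCdef
  set S : ℝ := ⨆ p : (K ×ˢ K : Set (M × M)),
      ∑' x : G, ‖κ (x⁻¹ • (p : M × M).1, (p : M × M).2)‖ with hSdef
  -- basic continuity facts
  have hκc : ∀ x : G, Continuous fun m : M => κ (x⁻¹ • m, m) := fun x =>
    hκcont.comp ((hGcont x⁻¹).prodMk continuous_id)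
  have hχR : Continuous fun m : M => (χ m : ℝ) := NNReal.continuous_coe.comp hχcont
  have hχRsupp : HasCompactSupport fun m : M => (χ m : ℝ) :=
    hχsupp.comp_left (g := NNReal.toReal) rfl
  have hCbdd : BddAbove (Set.range fun m : M => (χ m : ℝ)) :=
    hχR.bddAbove_range_of_hasCompactSupport hχRsupp
  have hCle : ∀ m : M, (χ m : ℝ) ≤ C := fun m => le_ciSup hCbdd m
  have hC0 : 0 ≤ C := Real.iSup_nonneg fun m => (χ m).coe_nonneg
  have hS0 : 0 ≤ S := Real.iSup_nonneg fun p => tsum_nonneg fun x => norm_nonneg _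
  -- summability of the fibers
  have hsummable : ∀ m₁ m₂ : M, Summable fun x : G => ‖κ (x⁻¹ • m₁, m₂)‖ := by
    intro m₁ m₂
    have := (hκmem m₁ m₂).summable (by norm_num)
    simpa using this
  have hSle : ∀ m ∈ K, (∑' x : G, ‖κ (x⁻¹ • m, m)‖) ≤ S := by
    intro m hm
    exact le_ciSup hbdd (⟨(m, m), Set.mk_mem_prod hm hm⟩ :
      (K ×ˢ K : Set (M × M)))
  -- the norm of the integrand
  have hnorm : ∀ (x : G) (m : M),
      (‖(((χ (x • m) : ℝ) : ℂ)) ^ 2 * κ (x⁻¹ • m, m)‖₊ : ℝ≥0∞)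
        = ((χ (x • m) : ℝ≥0∞)) ^ 2 * (‖κ (x⁻¹ • m, m)‖₊ : ℝ≥0∞) := by
    intro x m
    rw [nnnorm_mul, nnnorm_pow, Complex.nnnorm_real, NNReal.nnnorm_eq]
    push_cast
    ring
  -- lintegral after the substitution m ↦ x⁻¹ • m
  set L : G → ℝ≥0∞ := fun x =>
    ∫⁻ m, ((χ m : ℝ≥0∞)) ^ 2 * (‖κ (x⁻¹ • m, m)‖₊ : ℝ≥0∞) ∂μ with hLdef
  have hmeas : ∀ x : G, Measurable fun m : M =>
      ((χ m : ℝ≥0∞)) ^ 2 * (‖κ (x⁻¹ • m, m)‖₊ : ℝ≥0∞) := by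
    intro x
    exact ((ENNReal.continuous_coe.comp hχcont).measurable.pow_const 2).mul
      ((ENNReal.continuous_coe.comp ((hκc x).nnnorm)).measurable)
  have hsub : ∀ x : G,
      (∫⁻ m, ((χ (x • m) : ℝ≥0∞)) ^ 2 * (‖κ (x⁻¹ • m, m)‖₊ : ℝ≥0∞) ∂μ) = L x := by
    intro x
    have hmeas' : Measurable fun m : M =>
        ((χ (x • m) : ℝ≥0∞)) ^ 2 * (‖κ (x⁻¹ • m, m)‖₊ : ℝ≥0∞) := by
      exact ((ENNReal.continuous_coe.comp (hχcont.comp (hGcont x))).measurable.pow_const 2).mul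
        ((ENNReal.continuous_coe.comp ((hκc x).nnnorm)).measurable)
    have := (hinv x⁻¹).lintegral_comp hmeas'
    rw [hLdef]
    rw [← this]
    refine lintegral_congr fun m => ?_
    have h1 : x • x⁻¹ • m = m := smul_inv_smul x m
    have h2 : κ (x⁻¹ • (x⁻¹ • m), x⁻¹ • m) = κ (x⁻¹ • m, m) := by
      have := hκinv x (x⁻¹ • (x⁻¹ • m)) (x⁻¹ • m)
      rw [smul_inv_smul, smul_inv_smul] at this
      exact this.symm ▸ rfl
    simp only [h1, h2]
  -- bound on the total mass
  set B : ℝ≥0∞ := ENNReal.ofReal C ^ 2 * ENNReal.ofReal S * μ K with hBdef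
  have hLsum : (∑' x : G, L x) ≤ B := by
    have h1 : (∑' x : G, L x)
        = ∫⁻ m, ((χ m : ℝ≥0∞)) ^ 2 * (∑' x : G, (‖κ (x⁻¹ • m, m)‖₊ : ℝ≥0∞)) ∂μ := by
      rw [hLdef]
      rw [← lintegral_tsum fun x => (hmeas x).aemeasurable]
      exact lintegral_congr fun m => ENNReal.tsum_mul_left
    rw [h1]
    have h2 : ∀ m : M, ((χ m : ℝ≥0∞)) ^ 2 * (∑' x : G, (‖κ (x⁻¹ • m, m)‖₊ : ℝ≥0∞))
        ≤ K.indicator (fun _ => ENNReal.ofReal C ^ 2 * ENNReal.ofReal S) m := by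
      intro m
      by_cases hm : m ∈ K
      · rw [Set.indicator_of_mem hm]
        refine mul_le_mul' (pow_le_pow_left' ?_ 2) ?_
        · rw [show ((χ m : ℝ≥0∞)) = ENNReal.ofReal (χ m : ℝ) by
            simp [ENNReal.ofReal_coe_nnreal]]
          exact ENNReal.ofReal_le_ofReal (hCle m)
        · have hsum := hsummable m m
          have : (∑' x : G, (‖κ (x⁻¹ • m, m)‖₊ : ℝ≥0∞))
              = ENNReal.ofReal (∑' x : G, ‖κ (x⁻¹ • m, m)‖) := by
            rw [ENNReal.ofReal_tsum_of_nonneg (fun x => norm_nonneg _) hsum]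
            exact tsum_congr fun x => (ofReal_norm_eq_enorm _).symm
          rw [this]
          exact ENNReal.ofReal_le_ofReal (hSle m hm)
      · have : χ m = 0 := image_eq_zero_of_notMem_tsupport hm
        rw [Set.indicator_of_notMem hm, this]
        simp
    calc ∫⁻ m, ((χ m : ℝ≥0∞)) ^ 2 * (∑' x : G, (‖κ (x⁻¹ • m, m)‖₊ : ℝ≥0∞)) ∂μ
        ≤ ∫⁻ m, K.indicator (fun _ => ENNReal.ofReal C ^ 2 * ENNReal.ofReal S) m ∂μ :=
          lintegral_mono h2
      _ = ENNReal.ofReal C ^ 2 * ENNReal.ofReal S * μ K := by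
          rw [lintegral_indicator (isClosed_tsupport χ).measurableSet _]
          simp [mul_comm]; rfl
      _ = B := rfl
  have hBfin : B ≠ ⊤ := by
    rw [hBdef]
    exact ENNReal.mul_ne_top (ENNReal.mul_ne_top
      (by simp [ENNReal.pow_ne_top, ENNReal.ofReal_ne_top]) ENNReal.ofReal_ne_top) hK.ne
  have hLfin : ∀ x : G, L x ≠ ⊤ := fun x =>
    ne_top_of_le_ne_top hBfin ((ENNReal.le_tsum x).trans hLsum)
  -- the lintegral of the norm of the integrand is L x
  have hlint : ∀ x : G,
      (∫⁻ m, (‖(((χ (x • m) : ℝ) : ℂ)) ^ 2 * κ (x⁻¹ • m, m)‖₊ : ℝ≥0∞) ∂μ) = L x := by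
    intro x
    rw [← hsub x]
    exact lintegral_congr fun m => hnorm x m
  -- integrability
  have hintg : ∀ x : G,
      Integrable (fun m => (((χ (x • m) : ℝ) : ℂ)) ^ 2 * κ (x⁻¹ • m, m)) μ := by
    intro x
    constructor
    · exact (Continuous.aestronglyMeasurable (by
        exact ((Complex.continuous_ofReal.comp (hχR.comp (hGcont x))).pow 2).mul (hκc x)))
    · rw [HasFiniteIntegral]
      change (∫⁻ m, (‖(((χ (x • m) : ℝ) : ℂ)) ^ 2 * κ (x⁻¹ • m, m)‖₊ : ℝ≥0∞) ∂μ) < ⊤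
      rw [hlint x]
      exact lt_of_le_of_ne le_top (hLfin x)
  refine ⟨hintg, ?_, ?_⟩ <;>
  · have hle : ∀ x : G,
        ‖∫ m, (((χ (x • m) : ℝ) : ℂ)) ^ 2 * κ (x⁻¹ • m, m) ∂μ‖ ≤ (L x).toReal := by
      intro x
      calc ‖∫ m, (((χ (x • m) : ℝ) : ℂ)) ^ 2 * κ (x⁻¹ • m, m) ∂μ‖
          ≤ (∫⁻ m, (‖(((χ (x • m) : ℝ) : ℂ)) ^ 2 * κ (x⁻¹ • m, m)‖₊ : ℝ≥0∞) ∂μ).toReal := by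
            rw [show (∫⁻ m, (‖(((χ (x • m) : ℝ) : ℂ)) ^ 2 * κ (x⁻¹ • m, m)‖₊ : ℝ≥0∞) ∂μ)
              = ∫⁻ m, ENNReal.ofReal ‖(((χ (x • m) : ℝ) : ℂ)) ^ 2 * κ (x⁻¹ • m, m)‖ ∂μ from
              lintegral_congr fun m => (ofReal_norm_eq_enorm _).symm]
            exact norm_integral_le_lintegral_norm _
        _ = (L x).toReal := by rw [hlint x]
    have hsumL : Summable fun x : G => (L x).toReal :=
      ENNReal.summable_toReal (ne_top_of_le_ne_top hBfin hLsum)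
    have hsum2 : Summable fun x : G =>
        ‖∫ m, (((χ (x • m) : ℝ) : ℂ)) ^ 2 * κ (x⁻¹ • m, m) ∂μ‖ :=
      Summable.of_nonneg_of_le (fun x => norm_nonneg _) hle hsumL
    first
    | exact hsum2
    | · calc ∑' x : G, ‖∫ m, (((χ (x • m) : ℝ) : ℂ)) ^ 2 * κ (x⁻¹ • m, m) ∂μ‖
            ≤ ∑' x : G, (L x).toReal := Summable.tsum_le_tsum hle hsum2 hsumL
        _ = (∑' x : G, L x).toReal := (ENNReal.tsum_toReal_eq hLfin).symm
        _ ≤ B.toReal := ENNReal.toReal_mono hBfin hLsum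
        _ = (μ K).toReal * C ^ 2 * S := by
            rw [hBdef, ENNReal.toReal_mul, ENNReal.toReal_mul, ENNReal.toReal_pow,
              ENNReal.toReal_ofReal hC0, ENNReal.toReal_ofReal hS0]
            ring
end

section
/- Let G be a group generated by a finite set S, and let ℓ be the associated word length on G (ℓ(x) is the least n such that x is a product of n elements of S ∪ S⁻¹, with ℓ(e) = 0). For a subset T ⊆ G and r > 0 set B_r(T) := {h ∈ G : ∃ s ∈ T, ℓ(hs⁻¹) < r}. Let f ∈ ℓ¹(G), let r > 0, and let C ≥ 0. For f ∈ ℓ¹(G) and φ ∈ ℓ²(G) define the convolution (f⋆φ)(x) = ∑_{y∈G} f(xy⁻¹)φ(y) (the sum converges absolutely). If for every φ ∈ ℓ²(G) one has (∑_{x ∈ G∖B_r(supp φ)} |(f⋆φ)(x)|²)^{1/2} ≤ C · ‖φ‖_{ℓ²(G)}, then (∑_{x∈G, ℓ(x) ≥ r} |f(x)|²)^{1/2} ≤ C. -/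
/-- The word length of `x ∈ G` with respect to a generating set `S`: the least `n` such that
`x` is a product of `n` elements of `S ∪ S⁻¹` (so the identity has word length `0`). -/
noncomputable def wordLength {G : Type*} [Group G] (S : Set G) (x : G) : ℕ :=
  sInf {n : ℕ | ∃ l : List G, (∀ a ∈ l, a ∈ S ∪ S⁻¹) ∧ l.length = n ∧ l.prod = x}

/-- The `r`-neighbourhood `B_r(T) = {h ∈ G : ∃ s ∈ T, ℓ(h s⁻¹) < r}` of a subset `T ⊆ G`
with respect to the word length determined by `S`. -/
def wordBall {G : Type*} [Group G] (S : Set G) (r : ℝ) (T : Set G) : Set G :=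
  {h : G | ∃ s ∈ T, (wordLength S (h * s⁻¹) : ℝ) < r}

/-- Let `G` be generated by a finite set `S`, with word length `ℓ`.
If `f ∈ ℓ¹(G)` is such that for every `φ ∈ ℓ²(G)` the restriction of the convolution `f ⋆ φ`
to the complement of `B_r(supp φ)` has `ℓ²`-norm at most `C·‖φ‖_{ℓ²}`, then
`(∑_{ℓ(x) ≥ r} |f(x)|²)^{1/2} ≤ C`. -/
theorem muNorm_ge_tail_l2_norm
    {G : Type*} [Group G] (S : Finset G)
    (hS : Subgroup.closure (S : Set G) = ⊤)
    (f : G → ℂ) (hf : Summable fun x : G => ‖f x‖)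
    (r : ℝ) (hr : 0 < r) (C : ℝ) (hC : 0 ≤ C)
    (h : ∀ φ : G → ℂ, (Summable fun y : G => ‖φ y‖ ^ 2) →
      Real.sqrt (∑' x : {x : G // x ∉ wordBall (S : Set G) r (Function.support φ)},
          ‖∑' y : G, f ((x : G) * y⁻¹) * φ y‖ ^ 2)
        ≤ C * Real.sqrt (∑' y : G, ‖φ y‖ ^ 2)) :
    Real.sqrt (∑' x : {x : G // r ≤ (wordLength (S : Set G) x : ℝ)}, ‖f (x : G)‖ ^ 2) ≤ C := by
  classical
  set φ : G → ℂ := fun y => if y = 1 then 1 else 0 with hφ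
  have hsupp : Function.support φ = {1} := by
    ext y; simp [φ, Function.support]
  have hsum : Summable fun y : G => ‖φ y‖ ^ 2 :=
    summable_of_ne_finset_zero (s := ({1} : Finset G))
      (by intro y hy; simp only [Finset.mem_singleton] at hy; simp [φ, hy])
  have key := h φ hsum
  have h1 : (∑' y : G, ‖φ y‖ ^ 2) = 1 := by
    rw [tsum_eq_single 1 (by intro y hy; simp [φ, hy])]
    simp [φ]
  have h2 : ∀ x : G, (∑' y : G, f (x * y⁻¹) * φ y) = f x := by
    intro x
    rw [tsum_eq_single 1 (by intro y hy; simp [φ, hy])]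
    simp [φ]
  have hset : ∀ x : G, (x ∉ wordBall (S : Set G) r (Function.support φ)) ↔
      r ≤ (wordLength (S : Set G) x : ℝ) := by
    intro x
    simp [wordBall, hsupp, not_lt]
  rw [h1, Real.sqrt_one, mul_one] at key
  have heq : (∑' x : {x : G // x ∉ wordBall (S : Set G) r (Function.support φ)},
      ‖∑' y : G, f ((x : G) * y⁻¹) * φ y‖ ^ 2)
      = ∑' x : {x : G // r ≤ (wordLength (S : Set G) x : ℝ)}, ‖f (x : G)‖ ^ 2 := by
    rw [tsum_congr (fun x => by rw [h2 (x : G)])]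
    exact (Equiv.subtypeEquivRight hset).tsum_eq fun x => ‖f (x : G)‖ ^ 2
  rw [← heq]
  exact key
end

section
/- Let G be a group generated by a finite set S, and let ℓ be the associated word length on G. For a subset T ⊆ G and r > 0 set B_r(T) := {h ∈ G : ∃ s ∈ T, ℓ(hs⁻¹) < r}, and write B_r := {h : ℓ(h) < r}. Let f ∈ ℓ¹(G) and φ ∈ ℓ²(G), and define (f⋆φ)(x) = ∑_{y∈G} f(xy⁻¹)φ(y). Then for every r > 0 and every x ∈ G ∖ B_r(supp φ) one has (f⋆φ)(x) = ((f·1_{G∖B_r}) ⋆ φ)(x), where 1_{G∖B_r} is the indicator function of {y : ℓ(y) ≥ r}; consequently (∑_{x ∈ G∖B_r(supp φ)} |(f⋆φ)(x)|²)^{1/2} ≤ (∑_{y∈G, ℓ(y) ≥ r} |f(y)|) · ‖φ‖_{ℓ²(G)}. -/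
open scoped ENNReal NNReal


/-- Let `G` be generated by a finite set `S`, with word length `ℓ`, and let
`f ∈ ℓ¹(G)`, `φ ∈ ℓ²(G)`. For every `r > 0` and every `x ∉ B_r(supp φ)` one has
`(f ⋆ φ)(x) = ((f·1_{G∖B_r}) ⋆ φ)(x)`; consequently the `ℓ²`-norm of `f ⋆ φ` restricted to the
complement of `B_r(supp φ)` is at most `(∑_{ℓ(y) ≥ r} |f(y)|)·‖φ‖_{ℓ²}`. -/
theorem convolution_off_ball_estimate
    {G : Type*} [Group G] (S : Finset G)
    (hS : Subgroup.closure (S : Set G) = ⊤)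
    (f : G → ℂ) (hf : Summable fun x : G => ‖f x‖)
    (φ : G → ℂ) (hφ : Summable fun y : G => ‖φ y‖ ^ 2)
    (r : ℝ) (hr : 0 < r) :
    (∀ x : G, x ∉ wordBall (S : Set G) r (Function.support φ) →
      ∑' y : G, f (x * y⁻¹) * φ y
        = ∑' y : G,
            (if r ≤ (wordLength (S : Set G) (x * y⁻¹) : ℝ) then f (x * y⁻¹) else 0) * φ y) ∧
    Real.sqrt (∑' x : {x : G // x ∉ wordBall (S : Set G) r (Function.support φ)},
        ‖∑' y : G, f ((x : G) * y⁻¹) * φ y‖ ^ 2)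
      ≤ (∑' y : {y : G // r ≤ (wordLength (S : Set G) y : ℝ)}, ‖f (y : G)‖) *
        Real.sqrt (∑' y : G, ‖φ y‖ ^ 2) := by
  classical
  set ℓ : G → ℝ := fun z => (wordLength (S : Set G) z : ℝ) with hℓ
  set g : G → ℂ := fun z => if r ≤ ℓ z then f z else 0 with hg
  -- Part 1
  have part1 : ∀ x : G, x ∉ wordBall (S : Set G) r (Function.support φ) →
      ∑' y : G, f (x * y⁻¹) * φ y = ∑' y : G, g (x * y⁻¹) * φ y := by
    intro x hx
    refine tsum_congr fun y => ?_
    by_cases hy : φ y = 0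
    · simp [hy]
    · have hr' : r ≤ ℓ (x * y⁻¹) := by
        by_contra h
        push_neg at h
        exact hx ⟨y, hy, h⟩
      simp [hg, hr']
  refine ⟨part1, ?_⟩
  -- setup
  haveI : Fact ((1 : ℝ≥0∞) ≤ 2) := ⟨one_le_two⟩
  set K := {x : G // x ∉ wordBall (S : Set G) r (Function.support φ)} with hK
  set B := Real.sqrt (∑' y : G, ‖φ y‖ ^ 2) with hB
  have hBnn : 0 ≤ B := Real.sqrt_nonneg _
  have htR : ((2 : ℝ≥0∞)).toReal = 2 := by simp
  have hpos : 0 < ((2 : ℝ≥0∞)).toReal := by rw [htR]; norm_num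
  have hrpow : ∀ t : ℝ, 0 ≤ t → t ^ ((2 : ℝ≥0∞)).toReal = t ^ (2 : ℕ) := by
    intro t ht
    rw [htR, ← Real.rpow_natCast t 2]
    norm_num
  have hBsq : B ^ (2:ℕ) = ∑' y : G, ‖φ y‖ ^ 2 := by
    rw [hB, sq, Real.mul_self_sqrt (tsum_nonneg fun y => sq_nonneg _)]
  -- translated functions are in ℓ²(K)
  have hinj : ∀ z : G, Function.Injective (fun x : K => z⁻¹ * (x : G)) := by
    intro z x y hxy
    exact Subtype.ext (by simpa using hxy)
  have hTsum : ∀ z : G, Summable fun x : K => ‖φ (z⁻¹ * (x : G))‖ ^ (2:ℕ) := by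
    intro z
    exact ((Equiv.mulLeft z⁻¹).summable_iff.2 hφ).comp_injective Subtype.coe_injective
  have hTmem : ∀ z : G, Memℓp (fun x : K => φ (z⁻¹ * (x : G))) 2 := by
    intro z
    apply memℓp_gen
    have := hTsum z
    refine this.congr fun x => ?_
    rw [hrpow _ (norm_nonneg _)]
  set T : G → lp (fun _ : K => ℂ) 2 := fun z => ⟨fun x : K => φ (z⁻¹ * (x : G)), hTmem z⟩
    with hT
  have hTnorm : ∀ z : G, ‖T z‖ ≤ B := by
    intro z
    apply lp.norm_le_of_tsum_le hpos hBnn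
    have h1 : ∑' x : K, ‖φ (z⁻¹ * (x : G))‖ ^ ((2 : ℝ≥0∞)).toReal
        = ∑' x : K, ‖φ (z⁻¹ * (x : G))‖ ^ (2:ℕ) :=
      tsum_congr fun x => hrpow _ (norm_nonneg _)
    have h2 : ∑' x : K, ‖φ (z⁻¹ * (x : G))‖ ^ (2:ℕ) ≤ ∑' y : G, ‖φ y‖ ^ 2 :=
      tsum_comp_le_tsum_of_inj hφ (fun y => sq_nonneg _) (hinj z)
    rw [show (T z : ∀ _ : K, ℂ) = fun x : K => φ (z⁻¹ * (x : G)) from rfl]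
    rw [h1, hrpow B hBnn, hBsq]
    exact h2
  set Φ : G → lp (fun _ : K => ℂ) 2 := fun z => g z • T z with hΦ
  have hgle : ∀ z, ‖g z‖ ≤ ‖f z‖ := by
    intro z
    by_cases h : r ≤ ℓ z <;> simp [hg, h]
  have hgsum : Summable fun z => ‖g z‖ :=
    hf.of_nonneg_of_le (fun z => norm_nonneg _) hgle
  have hΦnorm : ∀ z, ‖Φ z‖ ≤ ‖g z‖ * B := by
    intro z
    rw [hΦ]
    simp only [norm_smul]
    exact mul_le_mul_of_nonneg_left (hTnorm z) (norm_nonneg _)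
  have hΦnormsum : Summable fun z => ‖Φ z‖ :=
    (hgsum.mul_right B).of_nonneg_of_le (fun z => norm_nonneg _) hΦnorm
  have hΦsum : Summable Φ := hΦnormsum.of_norm
  set Ψ : lp (fun _ : K => ℂ) 2 := ∑' z, Φ z with hΨ
  -- evaluation CLM
  have hΨapply : ∀ x : K, Ψ x = ∑' z : G, g z * φ (z⁻¹ * (x : G)) := by
    intro x
    let ev : lp (fun _ : K => ℂ) 2 →L[ℂ] ℂ :=
      LinearMap.mkContinuous
        { toFun := fun u => u x
          map_add' := fun u v => rfl
          map_smul' := fun c u => rfl }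
        1 (fun u => by rw [one_mul]; exact lp.norm_apply_le_norm two_ne_zero u x)
    have : ev Ψ = ∑' z, ev (Φ z) := ev.map_tsum hΦsum
    exact this
  -- the convolution at x ∈ K equals Ψ x
  have key : ∀ x : K, (∑' y : G, f ((x : G) * y⁻¹) * φ y) = Ψ x := by
    intro x
    rw [hΨapply x, part1 (x : G) x.2]
    have e : G ≃ G := (Equiv.inv G).trans (Equiv.mulRight (x : G))
    calc ∑' y : G, g ((x : G) * y⁻¹) * φ y
        = ∑' z : G, g ((x:G) * (((Equiv.inv G).trans (Equiv.mulRight (x:G))) z)⁻¹)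
            * φ (((Equiv.inv G).trans (Equiv.mulRight (x:G))) z) :=
          (((Equiv.inv G).trans (Equiv.mulRight (x:G))).tsum_eq
            (fun y => g ((x : G) * y⁻¹) * φ y)).symm
      _ = ∑' z : G, g z * φ (z⁻¹ * (x : G)) := by
          refine tsum_congr fun z => ?_
          have h1 : ((x:G) * (((Equiv.inv G).trans (Equiv.mulRight (x:G))) z)⁻¹) = z := by
            simp [Equiv.mulRight, mul_inv_rev, ← mul_assoc]
          have h2 : (((Equiv.inv G).trans (Equiv.mulRight (x:G))) z) = z⁻¹ * (x:G) := by
            simp [Equiv.mulRight]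
          rw [h1, h2]
  -- LHS equals ‖Ψ‖
  have hLHS : Real.sqrt (∑' x : K, ‖∑' y : G, f ((x : G) * y⁻¹) * φ y‖ ^ 2) = ‖Ψ‖ := by
    rw [lp.norm_eq_tsum_rpow hpos Ψ]
    rw [htR]
    rw [Real.sqrt_eq_rpow]
    congr 1
    · refine tsum_congr fun x => ?_
      rw [key x, ← Real.rpow_natCast ‖Ψ x‖ 2]
      norm_num
  rw [hLHS]
  -- A equals tsum of ‖g‖
  have hA : (∑' y : {y : G // r ≤ (wordLength (S : Set G) y : ℝ)}, ‖f (y : G)‖)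
      = ∑' z : G, ‖g z‖ := by
    have h1 : (∑' y : ({y : G | r ≤ (wordLength (S : Set G) y : ℝ)} : Set G), ‖f (y : G)‖)
        = ∑' z : G, Set.indicator {y : G | r ≤ (wordLength (S : Set G) y : ℝ)}
            (fun y => ‖f y‖) z :=
      tsum_subtype {y : G | r ≤ (wordLength (S : Set G) y : ℝ)} (fun y => ‖f y‖)
    rw [show (∑' y : {y : G // r ≤ (wordLength (S : Set G) y : ℝ)}, ‖f (y : G)‖)
        = ∑' y : ({y : G | r ≤ (wordLength (S : Set G) y : ℝ)} : Set G), ‖f (y : G)‖ from rfl,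
      h1]
    refine tsum_congr fun z => ?_
    by_cases h : r ≤ ℓ z
    · have h' : r ≤ (wordLength (S : Set G) z : ℝ) := h
      simp [Set.indicator, hg, h', hℓ]
    · have h' : ¬ r ≤ (wordLength (S : Set G) z : ℝ) := h
      simp [Set.indicator, hg, h', hℓ]
  rw [hA]
  calc ‖Ψ‖ ≤ ∑' z, ‖Φ z‖ := norm_tsum_le_tsum_norm hΦnormsum
    _ ≤ ∑' z, ‖g z‖ * B := Summable.tsum_le_tsum hΦnorm hΦnormsum (hgsum.mul_right B)
    _ = (∑' z : G, ‖g z‖) * B := tsum_mul_right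
end

section
/- Let G be a group generated by a finite set S, with word length ℓ; for T ⊆ G and r > 0 set B_r(T) := {h ∈ G : ∃ s ∈ T, ℓ(hs⁻¹) < r}. Let A, b > 0 and let ψ : G → ℂ satisfy |ψ(x)| ≤ A·e^{−b·ℓ(x)²} for all x ∈ G (so in particular ψ ∈ ℓ¹(G), and (ψ⋆φ)(x) = ∑_{y∈G} ψ(xy⁻¹)φ(y) is defined for φ ∈ ℓ²(G)). Then for every α > 0 there exists A' > 0 such that for all r > 0 and all φ ∈ ℓ²(G): (∑_{x ∈ G∖B_r(supp φ)} |(ψ⋆φ)(x)|²)^{1/2} ≤ A' · r^{−α} · ‖φ‖_{ℓ²(G)}. -/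
lemma summable_pow_mul_exp_neg_sq (d : ℝ) (hd : 0 ≤ d) {c : ℝ} (hc : 0 < c) :
    Summable (fun n : ℕ => d ^ n * Real.exp (-c * (n : ℝ) ^ 2)) := by
  apply summable_of_ratio_norm_eventually_le (r := 1/2) (by norm_num)
  have h2 : Filter.Tendsto (fun n : ℕ => c * (2 * (n:ℝ) + 1)) Filter.atTop Filter.atTop := by
    have := (tendsto_natCast_atTop_atTop (R := ℝ)).const_mul_atTop (by positivity : (0:ℝ) < 2*c)
    have h3 := Filter.tendsto_atTop_add_const_right Filter.atTop c this
    convert h3 using 2 with n; ring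
  have htend : Filter.Tendsto (fun n : ℕ => d * Real.exp (-c * (2 * (n:ℝ) + 1)))
      Filter.atTop (nhds 0) := by
    rw [show (0:ℝ) = d * 0 by ring]
    apply Filter.Tendsto.const_mul
    apply Real.tendsto_exp_atBot.comp
    have := Filter.tendsto_neg_atTop_atBot.comp h2
    convert this using 2 with n; simp [neg_mul]
  have hev : ∀ᶠ n : ℕ in Filter.atTop, d * Real.exp (-c * (2 * (n:ℝ) + 1)) ≤ 1/2 :=
    htend.eventually_le_const (by norm_num)
  filter_upwards [hev] with n hn
  have h1 : d ^ (n+1) * Real.exp (-c * ((n:ℝ)+1) ^ 2)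
      = (d ^ n * Real.exp (-c * (n:ℝ)^2)) * (d * Real.exp (-c * (2*(n:ℝ)+1))) := by
    rw [pow_succ, show (-c * ((n:ℝ)+1)^2) = (-c * (n:ℝ)^2) + (-c*(2*(n:ℝ)+1)) by ring, Real.exp_add]; ring
  rw [Real.norm_eq_abs, Real.norm_eq_abs, abs_of_nonneg (by positivity), abs_of_nonneg (by positivity)]
  push_cast
  rw [h1]
  calc (d ^ n * Real.exp (-c * (n:ℝ)^2)) * (d * Real.exp (-c * (2*(n:ℝ)+1)))
      ≤ (d ^ n * Real.exp (-c * (n:ℝ)^2)) * (1/2) :=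
        mul_le_mul_of_nonneg_left hn (by positivity)
    _ = 1/2 * (d ^ n * Real.exp (-c * (n:ℝ)^2)) := by ring



lemma wordLength_spec {G : Type*} [Group G] (S : Set G) (hS : Subgroup.closure S = ⊤) (x : G) :
    ∃ l : List G, (∀ a ∈ l, a ∈ S ∪ S⁻¹) ∧ l.length = wordLength S x ∧ l.prod = x := by
  have hx : x ∈ Submonoid.closure (S ∪ S⁻¹) := by
    rw [← Subgroup.closure_toSubmonoid]
    show x ∈ (Subgroup.closure S : Subgroup G)
    rw [hS]; trivial
  obtain ⟨l, hl, hp⟩ := Submonoid.exists_list_of_mem_closure hx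
  have hne : {n : ℕ | ∃ l : List G, (∀ a ∈ l, a ∈ S ∪ S⁻¹) ∧ l.length = n ∧ l.prod = x}.Nonempty :=
    ⟨l.length, l, hl, rfl, hp⟩
  exact Nat.sInf_mem hne

lemma summable_exp_neg_wordLength_sq {G : Type*} [Group G] (S : Finset G)
    (hS : Subgroup.closure (S : Set G) = ⊤) {c : ℝ} (hc : 0 < c) :
    Summable fun z : G => Real.exp (-c * ((wordLength (S : Set G) z : ℝ)) ^ 2) := by
  classical
  -- the finite alphabet
  have hfin : ((S : Set G) ∪ (S : Set G)⁻¹).Finite := S.finite_toSet.union S.finite_toSet.inv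
  set X := ((S : Set G) ∪ (S : Set G)⁻¹) with hX
  haveI : Fintype X := hfin.fintype
  -- choose minimal words
  choose l hmem hlen hprod using fun z => wordLength_spec (S : Set G) hS z
  -- injection into lists over the alphabet
  let ι : G → List X := fun z => (l z).pmap (fun a h => (⟨a, h⟩ : X)) (hmem z)
  have hlenι : ∀ z, (ι z).length = wordLength (S : Set G) z := by
    intro z; simp only [ι, List.length_pmap]; exact hlen z
  have hmap : ∀ z, (ι z).map Subtype.val = l z := by
    intro z
    simp only [ι, List.map_pmap]
    exact (List.pmap_eq_map _).trans (List.map_id _)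
  have hinj : Function.Injective ι := by
    intro z w h
    have : l z = l w := by rw [← hmap z, ← hmap w, h]
    rw [← hprod z, ← hprod w, this]
  -- summability over lists
  have hsig : Summable fun p : Σ n : ℕ, (Fin n → X) => Real.exp (-c * ((p.1 : ℝ)) ^ 2) := by
    rw [summable_sigma_of_nonneg (fun _ => by positivity)]
    constructor
    · intro n; exact .of_finite
    · apply Summable.congr (summable_pow_mul_exp_neg_sq (Fintype.card X : ℝ) (by positivity) hc)
      intro n
      rw [tsum_fintype]
      simp [Finset.sum_const, Fintype.card_fun, mul_comm]
  have hlist : Summable fun m : List X => Real.exp (-c * ((m.length : ℝ)) ^ 2) := by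
    have := (List.equivSigmaTuple (α := X)).summable_iff
      (f := fun p : Σ n : ℕ, (Fin n → X) => Real.exp (-c * ((p.1 : ℝ)) ^ 2))
    exact (this.mpr hsig).congr fun m => rfl
  refine (hlist.comp_injective hinj).congr fun z => ?_
  simp only [Function.comp_apply, hlenι]

open scoped ENNReal NNReal

/-- Cauchy–Schwarz-type estimate in `ℝ≥0∞`. -/
lemma enn_tsum_mul_sq_le {ι : Type*} (k g : ι → ℝ≥0∞) :
    (∑' i, k i * g i) ^ 2 ≤ 2 * (∑' i, k i) * ∑' i, k i * g i ^ 2 := by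
  have habsq : ∀ a b : ℝ≥0∞, a * b ≤ a ^ 2 + b ^ 2 := by
    intro a b
    rcases le_total a b with h | h
    · calc a * b ≤ b * b := mul_le_mul_left h b
        _ = b ^ 2 := (sq b).symm
        _ ≤ _ := le_add_self
    · calc a * b ≤ a * a := mul_le_mul_right h a
        _ = a ^ 2 := (sq a).symm
        _ ≤ _ := le_self_add
  calc (∑' i, k i * g i) ^ 2 = ∑' i, ∑' j, (k i * g i) * (k j * g j) := by
        rw [sq, ← ENNReal.tsum_mul_right]
        exact tsum_congr fun i => (ENNReal.tsum_mul_left).symm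
    _ ≤ ∑' i, ∑' j, (k i * k j) * (g i ^ 2 + g j ^ 2) := by
        refine ENNReal.tsum_le_tsum fun i => ENNReal.tsum_le_tsum fun j => ?_
        calc (k i * g i) * (k j * g j) = (k i * k j) * (g i * g j) := by ring
          _ ≤ (k i * k j) * (g i ^ 2 + g j ^ 2) := mul_le_mul_right (habsq _ _) _
    _ = ∑' i, ((k i * g i ^ 2) * ∑' j, k j + k i * ∑' j, (k j * g j ^ 2)) := by
        refine tsum_congr fun i => ?_
        rw [show (k i * g i ^ 2) * ∑' j, k j = ∑' j, (k i * g i ^ 2) * k j from (ENNReal.tsum_mul_left).symm,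
          show k i * ∑' j, (k j * g j ^ 2) = ∑' j, k i * (k j * g j ^ 2) from (ENNReal.tsum_mul_left).symm,
          ← ENNReal.tsum_add]
        exact tsum_congr fun j => by ring
    _ = (∑' i, k i * g i ^ 2) * (∑' j, k j) + (∑' i, k i) * ∑' j, (k j * g j ^ 2) := by
        rw [ENNReal.tsum_add, ENNReal.tsum_mul_right, ENNReal.tsum_mul_right]
    _ = 2 * (∑' i, k i) * ∑' i, k i * g i ^ 2 := by ring

/-- If `ψ` on a finitely generated group decays like a Gaussian in the word
length, then for every `α > 0` there is `A' > 0` such that for all `r > 0` and all `φ ∈ ℓ²(G)`,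
the `ℓ²`-norm of the convolution `ψ ⋆ φ` restricted to the complement of `B_r(supp φ)` is at
most `A'·r^{−α}·‖φ‖_{ℓ²}`. -/
theorem gaussian_decay_propagation_polynomial
    {G : Type*} [Group G] (S : Finset G)
    (hS : Subgroup.closure (S : Set G) = ⊤)
    (A b : ℝ) (hA : 0 < A) (hb : 0 < b)
    (ψ : G → ℂ)
    (hψ : ∀ x : G, ‖ψ x‖ ≤ A * Real.exp (-b * ((wordLength (S : Set G) x : ℝ)) ^ 2)) :
    ∀ α : ℝ, 0 < α → ∃ A' : ℝ, 0 < A' ∧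
      ∀ r : ℝ, 0 < r → ∀ φ : G → ℂ, (Summable fun y : G => ‖φ y‖ ^ 2) →
        Real.sqrt (∑' x : {x : G // x ∉ wordBall (S : Set G) r (Function.support φ)},
            ‖∑' y : G, ψ ((x : G) * y⁻¹) * φ y‖ ^ 2)
          ≤ A' * r ^ (-α) * Real.sqrt (∑' y : G, ‖φ y‖ ^ 2) := by
  intro α hα
  classical
  have hb2 : 0 < b / 2 := by linarith
  set L : G → ℝ := fun z => ((wordLength (S : Set G) z : ℝ)) with hLdef
  have hC : Summable fun z : G => Real.exp (-(b/2) * L z ^ 2) :=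
    summable_exp_neg_wordLength_sq S hS hb2
  set C : ℝ := ∑' z : G, Real.exp (-(b/2) * L z ^ 2) with hCdef
  have hC0 : 0 < C := Summable.tsum_pos hC (fun z => (Real.exp_pos _).le) 1 (Real.exp_pos _)
  refine ⟨Real.sqrt 2 * A * C * Real.exp (α ^ 2 / b), by positivity, ?_⟩
  intro r hr φ hφ2
  set Sφ : ℝ := ∑' y : G, ‖φ y‖ ^ 2 with hSphidef
  have hSphi0 : 0 ≤ Sφ := tsum_nonneg fun y => sq_nonneg _
  set Ω := {x : G // x ∉ wordBall (S : Set G) r (Function.support φ)} with hΩdef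
  set ψr : G → ℂ := fun z => if r ≤ L z then ψ z else 0 with hψrdef
  -- on the complement of the ball, ψ can be replaced by its truncation
  have key0 : ∀ x : Ω, ∀ y : G, ψ ((x : G) * y⁻¹) * φ y = ψr ((x : G) * y⁻¹) * φ y := by
    intro x y
    by_cases hy : φ y = 0
    · simp [hy]
    · have hy' : y ∈ Function.support φ := hy
      have hxr : r ≤ L ((x : G) * y⁻¹) := by
        by_contra hlt
        exact x.2 ⟨y, hy', not_le.mp hlt⟩
      simp [hψrdef, if_pos hxr]
  -- bound on the truncated kernel
  have hψr_le : ∀ z : G, ‖ψr z‖ ≤ A * Real.exp (-(b/2) * r ^ 2) * Real.exp (-(b/2) * L z ^ 2) := by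
    intro z
    by_cases hz : r ≤ L z
    · have hLz : 0 ≤ L z := le_trans hr.le hz
      have hsq : r ^ 2 ≤ L z ^ 2 := by nlinarith
      calc ‖ψr z‖ = ‖ψ z‖ := by rw [hψrdef]; simp [if_pos hz]
        _ ≤ A * Real.exp (-b * L z ^ 2) := hψ z
        _ = A * (Real.exp (-(b/2) * L z ^ 2) * Real.exp (-(b/2) * L z ^ 2)) := by
            rw [← Real.exp_add]; ring_nf
        _ ≤ A * (Real.exp (-(b/2) * r ^ 2) * Real.exp (-(b/2) * L z ^ 2)) := by
            have h2 : Real.exp (-(b/2) * L z ^ 2) ≤ Real.exp (-(b/2) * r ^ 2) :=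
              Real.exp_le_exp.mpr (by nlinarith)
            have h3 : (0:ℝ) ≤ Real.exp (-(b/2) * L z ^ 2) := (Real.exp_pos _).le
            exact mul_le_mul_of_nonneg_left (mul_le_mul_of_nonneg_right h2 h3) hA.le
        _ = A * Real.exp (-(b/2) * r ^ 2) * Real.exp (-(b/2) * L z ^ 2) := by ring
    · have : ψr z = 0 := by rw [hψrdef]; simp [if_neg hz]
      rw [this]; simp; positivity
  set K : ℝ := A * Real.exp (-(b/2) * r ^ 2) * C with hKdef
  have hK0 : 0 < K := by positivity
  have hψr_sum : Summable fun z : G => ‖ψr z‖ :=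
    Summable.of_nonneg_of_le (fun z => norm_nonneg _) hψr_le (hC.mul_left _)
  have hKle : ∑' z : G, ‖ψr z‖ ≤ K := by
    calc ∑' z : G, ‖ψr z‖
        ≤ ∑' z : G, A * Real.exp (-(b/2) * r ^ 2) * Real.exp (-(b/2) * L z ^ 2) :=
          Summable.tsum_le_tsum hψr_le hψr_sum (hC.mul_left _)
      _ = K := by rw [tsum_mul_left, hKdef, hCdef]
  -- ENNReal quantities
  set Kinf : ℝ≥0∞ := ∑' z : G, (‖ψr z‖₊ : ℝ≥0∞) with hKinf
  set Tinf : ℝ≥0∞ := ∑' y : G, (‖φ y‖₊ : ℝ≥0∞) ^ 2 with hTinf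
  have hψr_sum_nn : Summable fun z : G => ‖ψr z‖₊ := by
    rw [← NNReal.summable_coe]; simpa using hψr_sum
  have hKinf_le : Kinf ≤ ENNReal.ofReal K := by
    rw [hKinf, ← ENNReal.coe_tsum hψr_sum_nn]
    rw [ENNReal.ofReal]
    rw [ENNReal.coe_le_coe]
    rw [← NNReal.coe_le_coe, NNReal.coe_tsum, Real.coe_toNNReal _ hK0.le]
    simpa using hKle
  have hφ2nn : Summable fun y : G => ‖φ y‖₊ ^ 2 := by
    rw [← NNReal.summable_coe]; simpa using hφ2
  have hTinf_eq : Tinf = ENNReal.ofReal Sφ := by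
    rw [hSphidef, ENNReal.ofReal_tsum_of_nonneg (fun y => sq_nonneg _) hφ2, hTinf]
    exact tsum_congr fun y => by
      rw [ENNReal.ofReal_pow (norm_nonneg _), ofReal_norm_eq_enorm, enorm_eq_nnnorm]
  -- translation invariance of kernel sums
  have hrow : ∀ x : G, ∑' y : G, (‖ψr (x * y⁻¹)‖₊ : ℝ≥0∞) = Kinf := by
    intro x
    rw [hKinf]
    exact ((Equiv.inv G).trans (Equiv.mulLeft x)).tsum_eq fun z => (‖ψr z‖₊ : ℝ≥0∞)
  have hcol : ∀ y : G, ∑' x : G, (‖ψr (x * y⁻¹)‖₊ : ℝ≥0∞) = Kinf := by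
    intro y
    rw [hKinf]
    exact (Equiv.mulRight y⁻¹).tsum_eq fun z => (‖ψr z‖₊ : ℝ≥0∞)
  -- main ENNReal estimate
  have main : ∑' x : Ω, (∑' y : G, (‖ψr ((x:G) * y⁻¹)‖₊ : ℝ≥0∞) * (‖φ y‖₊ : ℝ≥0∞)) ^ 2
      ≤ 2 * Kinf ^ 2 * Tinf := by
    calc ∑' x : Ω, (∑' y : G, (‖ψr ((x:G) * y⁻¹)‖₊ : ℝ≥0∞) * (‖φ y‖₊ : ℝ≥0∞)) ^ 2
        ≤ ∑' x : Ω, 2 * Kinf * ∑' y : G, (‖ψr ((x:G) * y⁻¹)‖₊ : ℝ≥0∞) * (‖φ y‖₊ : ℝ≥0∞) ^ 2 := by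
          refine ENNReal.tsum_le_tsum fun x => ?_
          have h1 := enn_tsum_mul_sq_le (fun y => (‖ψr ((x:G) * y⁻¹)‖₊ : ℝ≥0∞))
            (fun y => (‖φ y‖₊ : ℝ≥0∞))
          rwa [hrow (x:G)] at h1
      _ = 2 * Kinf * ∑' x : Ω, ∑' y : G, (‖ψr ((x:G) * y⁻¹)‖₊ : ℝ≥0∞) * (‖φ y‖₊ : ℝ≥0∞) ^ 2 := by
          rw [ENNReal.tsum_mul_left]
      _ ≤ 2 * Kinf * ∑' x : G, ∑' y : G, (‖ψr (x * y⁻¹)‖₊ : ℝ≥0∞) * (‖φ y‖₊ : ℝ≥0∞) ^ 2 := by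
          refine mul_le_mul_right ?_ _
          exact ENNReal.tsum_comp_le_tsum_of_injective Subtype.val_injective
            fun x => ∑' y : G, (‖ψr (x * y⁻¹)‖₊ : ℝ≥0∞) * (‖φ y‖₊ : ℝ≥0∞) ^ 2
      _ = 2 * Kinf * ∑' y : G, ∑' x : G, (‖ψr (x * y⁻¹)‖₊ : ℝ≥0∞) * (‖φ y‖₊ : ℝ≥0∞) ^ 2 := by
          rw [ENNReal.tsum_comm]
      _ = 2 * Kinf * ∑' y : G, (∑' x : G, (‖ψr (x * y⁻¹)‖₊ : ℝ≥0∞)) * (‖φ y‖₊ : ℝ≥0∞) ^ 2 := by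
          refine congrArg _ (tsum_congr fun y => ?_)
          rw [ENNReal.tsum_mul_right]
      _ = 2 * Kinf * (Kinf * Tinf) := by
          rw [hTinf]
          refine congrArg _ ?_
          rw [← ENNReal.tsum_mul_left]
          exact tsum_congr fun y => by rw [hcol y]
      _ = 2 * Kinf ^ 2 * Tinf := by ring
  -- pointwise bound on the convolution
  have hW : ∀ x : Ω, (‖∑' y : G, ψ ((x:G) * y⁻¹) * φ y‖₊ : ℝ≥0∞)
      ≤ ∑' y : G, (‖ψr ((x:G) * y⁻¹)‖₊ : ℝ≥0∞) * (‖φ y‖₊ : ℝ≥0∞) := by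
    intro x
    have hMφ : ∀ y : G, ‖φ y‖ ≤ Real.sqrt Sφ := by
      intro y
      have h1 : ‖φ y‖ ^ 2 ≤ Sφ := Summable.le_tsum hφ2 y fun z _ => sq_nonneg _
      have h2 := Real.sqrt_le_sqrt h1
      rwa [Real.sqrt_sq (norm_nonneg _)] at h2
    have htrans : Summable fun y : G => ‖ψr ((x:G) * y⁻¹)‖ :=
      (((Equiv.inv G).trans (Equiv.mulLeft (x:G))).summable_iff
        (f := fun z => ‖ψr z‖)).mpr hψr_sum
    have hFsum : Summable fun y : G => ‖ψr ((x:G) * y⁻¹) * φ y‖ := by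
      refine Summable.of_nonneg_of_le (fun y => norm_nonneg _) ?_ (htrans.mul_right (Real.sqrt Sφ))
      intro y
      rw [norm_mul]
      exact mul_le_mul_of_nonneg_left (hMφ y) (norm_nonneg _)
    have hFnn : Summable fun y : G => ‖ψr ((x:G) * y⁻¹) * φ y‖₊ := by
      rw [← NNReal.summable_coe]; simpa using hFsum
    rw [tsum_congr (key0 x)]
    calc (‖∑' y : G, ψr ((x:G) * y⁻¹) * φ y‖₊ : ℝ≥0∞)
        ≤ ((∑' y : G, ‖ψr ((x:G) * y⁻¹) * φ y‖₊ : ℝ≥0) : ℝ≥0∞) :=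
          ENNReal.coe_le_coe.2 (nnnorm_tsum_le hFnn)
      _ = ∑' y : G, (‖ψr ((x:G) * y⁻¹) * φ y‖₊ : ℝ≥0∞) := ENNReal.coe_tsum hFnn
      _ = ∑' y : G, (‖ψr ((x:G) * y⁻¹)‖₊ : ℝ≥0∞) * (‖φ y‖₊ : ℝ≥0∞) := by
          exact tsum_congr fun y => by rw [nnnorm_mul, ENNReal.coe_mul]
  -- total ENNReal bound
  have htot : ∑' x : Ω, ((‖∑' y : G, ψ ((x:G) * y⁻¹) * φ y‖₊ ^ 2 : ℝ≥0) : ℝ≥0∞)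
      ≤ ENNReal.ofReal (2 * K ^ 2 * Sφ) := by
    calc ∑' x : Ω, ((‖∑' y : G, ψ ((x:G) * y⁻¹) * φ y‖₊ ^ 2 : ℝ≥0) : ℝ≥0∞)
        = ∑' x : Ω, ((‖∑' y : G, ψ ((x:G) * y⁻¹) * φ y‖₊ : ℝ≥0∞)) ^ 2 :=
          tsum_congr fun x => by rw [ENNReal.coe_pow]
      _ ≤ ∑' x : Ω, (∑' y : G, (‖ψr ((x:G) * y⁻¹)‖₊ : ℝ≥0∞) * (‖φ y‖₊ : ℝ≥0∞)) ^ 2 :=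
          ENNReal.tsum_le_tsum fun x => pow_le_pow_left' (hW x) 2
      _ ≤ 2 * Kinf ^ 2 * Tinf := main
      _ ≤ 2 * (ENNReal.ofReal K) ^ 2 * ENNReal.ofReal Sφ := by
          rw [hTinf_eq]
          exact mul_le_mul_left (mul_le_mul_right (pow_le_pow_left' hKinf_le 2) 2) _
      _ = ENNReal.ofReal (2 * K ^ 2 * Sφ) := by
          rw [show (2:ℝ≥0∞) = ENNReal.ofReal 2 by simp, ← ENNReal.ofReal_pow hK0.le,
            ← ENNReal.ofReal_mul (by norm_num : (0:ℝ) ≤ 2), ← ENNReal.ofReal_mul (by positivity)]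
  -- back to the reals
  have hne : (∑' x : Ω, ((‖∑' y : G, ψ ((x:G) * y⁻¹) * φ y‖₊ ^ 2 : ℝ≥0) : ℝ≥0∞)) ≠ ∞ :=
    ne_top_of_le_ne_top ENNReal.ofReal_ne_top htot
  have hsumW : Summable fun x : Ω => (‖∑' y : G, ψ ((x:G) * y⁻¹) * φ y‖₊ ^ 2 : ℝ≥0) :=
    ENNReal.tsum_coe_ne_top_iff_summable.mp hne
  have hreal : ∑' x : Ω, ‖∑' y : G, ψ ((x:G) * y⁻¹) * φ y‖ ^ 2 ≤ 2 * K ^ 2 * Sφ := by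
    have h1 : ((∑' x : Ω, (‖∑' y : G, ψ ((x:G) * y⁻¹) * φ y‖₊ ^ 2 : ℝ≥0) : ℝ≥0) : ℝ)
        ≤ 2 * K ^ 2 * Sφ := by
      have h2 : ((∑' x : Ω, (‖∑' y : G, ψ ((x:G) * y⁻¹) * φ y‖₊ ^ 2 : ℝ≥0) : ℝ≥0) : ℝ≥0∞)
          ≤ ENNReal.ofReal (2 * K ^ 2 * Sφ) := by
        rw [ENNReal.coe_tsum hsumW]; exact htot
      have h3 := ENNReal.toReal_le_of_le_ofReal (by positivity) h2
      simpa using h3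
    calc ∑' x : Ω, ‖∑' y : G, ψ ((x:G) * y⁻¹) * φ y‖ ^ 2
        = ((∑' x : Ω, (‖∑' y : G, ψ ((x:G) * y⁻¹) * φ y‖₊ ^ 2 : ℝ≥0) : ℝ≥0) : ℝ) := by
          rw [NNReal.coe_tsum]
          exact tsum_congr fun x => by push_cast; ring
      _ ≤ 2 * K ^ 2 * Sφ := h1
  -- the elementary inequality r^α ≤ exp (α²/b + (b/2) r²)
  have hkey : r ^ α ≤ Real.exp (α ^ 2 / b + b / 2 * r ^ 2) := by
    rw [Real.rpow_def_of_pos hr]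
    rw [Real.exp_le_exp]
    rcases le_total r 1 with h1 | h1
    · have hlog : Real.log r ≤ 0 := Real.log_nonpos hr.le h1
      have : α * Real.log r ≤ 0 := mul_nonpos_of_nonneg_of_nonpos hα.le hlog
      have hpos : 0 ≤ α ^ 2 / b + b / 2 * r ^ 2 := by positivity
      linarith
    · have hlog : Real.log r ≤ r := (Real.log_le_sub_one_of_pos hr).trans (by linarith)
      have h4 : α * Real.log r ≤ α * r := mul_le_mul_of_nonneg_left hlog hα.le
      have h5 : b * (α ^ 2 / b) = α ^ 2 := by field_simp
      nlinarith [sq_nonneg (b * r - α), mul_pos hb hr]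
  have hrpow : Real.exp (-(b/2) * r ^ 2) ≤ Real.exp (α ^ 2 / b) * r ^ (-α) := by
    have hrp : (0:ℝ) < r ^ α := Real.rpow_pos_of_pos hr α
    rw [Real.rpow_neg hr.le, ← div_eq_mul_inv, le_div_iff₀ hrp]
    calc Real.exp (-(b/2) * r ^ 2) * r ^ α
        ≤ Real.exp (-(b/2) * r ^ 2) * Real.exp (α ^ 2 / b + b / 2 * r ^ 2) :=
          mul_le_mul_of_nonneg_left hkey (Real.exp_pos _).le
      _ = Real.exp (α ^ 2 / b) := by rw [← Real.exp_add]; ring_nf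
  -- conclusion
  calc Real.sqrt (∑' x : Ω, ‖∑' y : G, ψ ((x:G) * y⁻¹) * φ y‖ ^ 2)
      ≤ Real.sqrt (2 * K ^ 2 * Sφ) := Real.sqrt_le_sqrt hreal
    _ = Real.sqrt 2 * K * Real.sqrt Sφ := by
        rw [Real.sqrt_mul (by positivity), Real.sqrt_mul (by norm_num : (0:ℝ) ≤ 2),
          Real.sqrt_sq hK0.le]
        try ring
    _ = (Real.sqrt 2 * A * C * Real.sqrt Sφ) * Real.exp (-(b/2) * r ^ 2) := by
        rw [hKdef]; ring
    _ ≤ (Real.sqrt 2 * A * C * Real.sqrt Sφ) * (Real.exp (α ^ 2 / b) * r ^ (-α)) := by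
        refine mul_le_mul_of_nonneg_left hrpow (by positivity)
    _ = Real.sqrt 2 * A * C * Real.exp (α ^ 2 / b) * r ^ (-α) * Real.sqrt Sφ := by ring
end

section
/- Let μ be a finite measure on ℝ, let ε > 0, and suppose μ({λ ∈ ℝ : |λ| ≤ 2ε} ∖ {0}) = 0. Let f : ℝ → ℂ be μ-integrable. Then the functions t ↦ ∫_ℝ f(λ)(λ+ε)e^{−t²(λ+ε)²} dμ(λ) and t ↦ ∫_ℝ f(λ)·λ·e^{−t²λ²} dμ(λ) are defined for every t > 0 and absolutely integrable over (0,∞), and (2/√π) ∫_0^∞ (∫_ℝ f(λ)(λ+ε)e^{−t²(λ+ε)²} dμ(λ)) dt = ∫_ℝ f(λ)·1_{{0}}(λ) dμ(λ) + (2/√π) ∫_0^∞ (∫_ℝ f(λ)·λ·e^{−t²λ²} dμ(λ)) dt. -/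
open MeasureTheory


section EtaHelpers
open Real Set

lemma eta_bnd (t x : ℝ) (ht : 0 < t) : |x * Real.exp (-t^2 * x^2)| ≤ 1/t := by
  have key : t * |x| ≤ Real.exp (t^2 * x^2) := by
    have h2 : (t*|x|)^2 = t^2*x^2 := by rw [mul_pow, sq_abs]
    calc t*|x| ≤ (t*|x|)^2 + 1 := by nlinarith [sq_nonneg (t*|x| - 1)]
    _ ≤ Real.exp ((t*|x|)^2) := Real.add_one_le_exp _
    _ = _ := by rw [h2]
  have h2 : (0:ℝ) < Real.exp (t^2*x^2) := Real.exp_pos _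
  rw [abs_mul, Real.abs_exp, neg_mul, Real.exp_neg, le_div_iff₀ ht,
    show |x| * (Real.exp (t^2*x^2))⁻¹ * t = (t*|x|) / Real.exp (t^2*x^2) by ring]
  exact (div_le_one h2).mpr key

lemma eta_gauss (x : ℝ) :
    ∫ t in Ioi (0:ℝ), x * Real.exp (-t^2 * x^2) = Real.sign x * (Real.sqrt Real.pi / 2) := by
  have hexp : ∀ t : ℝ, -t^2*x^2 = -(x^2)*t^2 := fun t => by ring
  rcases eq_or_ne x 0 with h | h
  · simp [h, Real.sign_zero]
  · have hx2 : (0:ℝ) < x^2 := by positivity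
    have h1 : ∫ t in Ioi (0:ℝ), x * Real.exp (-t^2 * x^2)
        = x * ∫ t in Ioi (0:ℝ), Real.exp (-(x^2) * t^2) := by
      simp_rw [hexp]; rw [integral_const_mul]
    rw [h1, integral_gaussian_Ioi, Real.sqrt_div Real.pi_pos.le, Real.sqrt_sq_eq_abs]
    rcases h.lt_or_gt with hx | hx
    · rw [Real.sign_of_neg hx, abs_of_neg hx]
      field_simp
    · rw [Real.sign_of_pos hx, abs_of_pos hx]
      field_simp

lemma eta_gauss_int (x : ℝ) (hx : x ≠ 0) :
    IntegrableOn (fun t : ℝ => x * Real.exp (-t^2 * x^2)) (Ioi 0) := by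
  have hx2 : (0:ℝ) < x^2 := by positivity
  simp_rw [show ∀ t:ℝ, -t^2*x^2 = -(x^2)*t^2 from fun t => by ring]
  exact ((integrable_exp_neg_mul_sq hx2).integrableOn (s := Ioi 0)).const_mul x

lemma eta_intL (μ : Measure ℝ) (f : ℝ → ℂ) (hf : Integrable f μ)
    (g : ℝ → ℝ) (hg : Continuous g) (t : ℝ) (ht : 0 < t) :
    Integrable (fun l => f l * ((g l * Real.exp (-t^2 * (g l)^2) : ℝ) : ℂ)) μ := by
  have hc : Continuous fun l : ℝ => ((g l * Real.exp (-t^2 * (g l)^2) : ℝ) : ℂ) := by fun_prop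
  have h := Integrable.bdd_mul hf hc.aestronglyMeasurable (c := 1/t)
    (Filter.Eventually.of_forall fun l => by rw [Complex.norm_real, Real.norm_eq_abs]; exact eta_bnd t (g l) ht)
  exact h.congr (Filter.Eventually.of_forall fun l => mul_comm _ _)

lemma eta_prodInt (μ : Measure ℝ) [IsFiniteMeasure μ] (f : ℝ → ℂ) (hf : Integrable f μ)
    (g : ℝ → ℝ) (hg : Continuous g) :
    Integrable
      (Function.uncurry fun l t : ℝ => f l * ((g l * Real.exp (-t^2 * (g l)^2) : ℝ) : ℂ))
      (μ.prod (volume.restrict (Ioi 0))) := by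
  have hFm : AEStronglyMeasurable
      (Function.uncurry fun l t : ℝ => f l * ((g l * Real.exp (-t^2 * (g l)^2) : ℝ) : ℂ))
      (μ.prod (volume.restrict (Ioi 0))) := by
    apply AEStronglyMeasurable.mul
    · exact hf.1.comp_quasiMeasurePreserving Measure.quasiMeasurePreserving_fst
    · apply Continuous.aestronglyMeasurable
      fun_prop
  rw [integrable_prod_iff hFm]
  constructor
  · refine Filter.Eventually.of_forall fun l => ?_
    rcases eq_or_ne (g l) 0 with h | h
    · simpa [Function.uncurry, h] using (integrable_zero ℝ ℂ (volume.restrict (Ioi (0:ℝ))))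
    · exact ((eta_gauss_int (g l) h).ofReal.const_mul (f l))
  · refine Integrable.mono' (hf.norm.mul_const (Real.sqrt Real.pi / 2))
      hFm.norm.integral_prod_right' (Filter.Eventually.of_forall fun l => ?_)
    simp only [Function.uncurry_apply_pair]
    rw [Real.norm_eq_abs, abs_of_nonneg (integral_nonneg fun t => norm_nonneg _)]
    have hg2 := eta_gauss |g l|
    rw [sq_abs] at hg2
    have hval : (∫ t in Ioi (0:ℝ),
        ‖f l * ((g l * Real.exp (-t^2 * (g l)^2) : ℝ) : ℂ)‖)
        = ‖f l‖ * (Real.sign |g l| * (Real.sqrt Real.pi / 2)) := by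
      simp only [norm_mul, Complex.norm_real, Real.norm_eq_abs, abs_mul, Real.abs_exp]
      rw [integral_const_mul, hg2]
    rw [hval]
    have hs : Real.sign |g l| ≤ 1 := by
      rcases Real.sign_apply_eq |g l| with h|h|h <;> rw [h] <;> norm_num
    nlinarith [norm_nonneg (f l), Real.sqrt_nonneg Real.pi,
      mul_nonneg (mul_nonneg (norm_nonneg (f l)) (Real.sqrt_nonneg Real.pi))
        (sub_nonneg.mpr hs)]

lemma eta_measurable_sign : Measurable Real.sign := by
  have : Real.sign = fun r : ℝ => if r < 0 then (-1:ℝ) else if 0 < r then 1 else 0 := by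
    funext r; rfl
  rw [this]
  exact Measurable.ite (measurableSet_lt measurable_id measurable_const) measurable_const
    (Measurable.ite (measurableSet_lt measurable_const measurable_id) measurable_const
      measurable_const)

end EtaHelpers

/-- Spectral-measure identity underlying the computation of the delocalised
`η`-invariant of a shifted operator: if `μ` is a finite measure on `ℝ` with no mass in
`{λ : |λ| ≤ 2ε} ∖ {0}` and `f` is `μ`-integrable, then the functions
`t ↦ ∫ f(λ)(λ+ε)e^{−t²(λ+ε)²} dμ(λ)` and `t ↦ ∫ f(λ)·λ·e^{−t²λ²} dμ(λ)` are defined for each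
`t > 0` and absolutely integrable over `(0,∞)`, and
`(2/√π)∫₀^∞ ∫ f(λ)(λ+ε)e^{−t²(λ+ε)²} dμ dt = ∫ f·1_{{0}} dμ + (2/√π)∫₀^∞ ∫ f(λ)λe^{−t²λ²} dμ dt`. -/
theorem eta_invariant_shift_identity
    (μ : Measure ℝ) [IsFiniteMeasure μ]
    (ε : ℝ) (hε : 0 < ε)
    (hμ : μ ({l : ℝ | |l| ≤ 2 * ε} \ {0}) = 0)
    (f : ℝ → ℂ) (hf : Integrable f μ) :
    (∀ t : ℝ, 0 < t →
      Integrable (fun l : ℝ => f l * (((l + ε) * Real.exp (-t ^ 2 * (l + ε) ^ 2) : ℝ) : ℂ)) μ) ∧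
    (∀ t : ℝ, 0 < t →
      Integrable (fun l : ℝ => f l * ((l * Real.exp (-t ^ 2 * l ^ 2) : ℝ) : ℂ)) μ) ∧
    IntegrableOn
      (fun t : ℝ => ∫ l, f l * (((l + ε) * Real.exp (-t ^ 2 * (l + ε) ^ 2) : ℝ) : ℂ) ∂μ)
      (Set.Ioi (0 : ℝ)) ∧
    IntegrableOn
      (fun t : ℝ => ∫ l, f l * ((l * Real.exp (-t ^ 2 * l ^ 2) : ℝ) : ℂ) ∂μ)
      (Set.Ioi (0 : ℝ)) ∧
    ((2 / Real.sqrt Real.pi : ℝ) : ℂ) *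
        ∫ t in Set.Ioi (0 : ℝ), ∫ l, f l * (((l + ε) * Real.exp (-t ^ 2 * (l + ε) ^ 2) : ℝ) : ℂ) ∂μ
      = (∫ l, Set.indicator ({0} : Set ℝ) f l ∂μ) +
        ((2 / Real.sqrt Real.pi : ℝ) : ℂ) *
          ∫ t in Set.Ioi (0 : ℝ), ∫ l, f l * ((l * Real.exp (-t ^ 2 * l ^ 2) : ℝ) : ℂ) ∂μ := by
  have hP1 : Integrable
      (Function.uncurry fun l t : ℝ => f l * (((l + ε) * Real.exp (-t^2 * (l + ε)^2) : ℝ) : ℂ))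
      (μ.prod (volume.restrict (Set.Ioi 0))) :=
    eta_prodInt μ f hf (fun l => l + ε) (by fun_prop)
  have hP2 : Integrable
      (Function.uncurry fun l t : ℝ => f l * ((l * Real.exp (-t^2 * l^2) : ℝ) : ℂ))
      (μ.prod (volume.restrict (Set.Ioi 0))) :=
    eta_prodInt μ f hf (fun l => l) (by fun_prop)
  refine ⟨fun t ht => eta_intL μ f hf (fun l => l + ε) (by fun_prop) t ht,
    fun t ht => eta_intL μ f hf (fun l => l) (by fun_prop) t ht,
    hP1.integral_prod_right, hP2.integral_prod_right, ?_⟩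
  -- swap the order of integration
  have hswap1 : (∫ t in Set.Ioi (0:ℝ),
        ∫ l, f l * (((l + ε) * Real.exp (-t ^ 2 * (l + ε) ^ 2) : ℝ) : ℂ) ∂μ)
      = ∫ l, (∫ t in Set.Ioi (0:ℝ),
          f l * (((l + ε) * Real.exp (-t ^ 2 * (l + ε) ^ 2) : ℝ) : ℂ)) ∂μ :=
    (integral_integral_swap hP1).symm
  have hswap2 : (∫ t in Set.Ioi (0:ℝ),
        ∫ l, f l * ((l * Real.exp (-t ^ 2 * l ^ 2) : ℝ) : ℂ) ∂μ)
      = ∫ l, (∫ t in Set.Ioi (0:ℝ), f l * ((l * Real.exp (-t ^ 2 * l ^ 2) : ℝ) : ℂ)) ∂μ :=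
    (integral_integral_swap hP2).symm
  rw [hswap1, hswap2]
  -- compute the inner integrals
  have hinner : ∀ (c : ℂ) (x : ℝ),
      (∫ t in Set.Ioi (0:ℝ), c * ((x * Real.exp (-t ^ 2 * x ^ 2) : ℝ) : ℂ))
        = c * ((Real.sign x * (Real.sqrt Real.pi / 2) : ℝ) : ℂ) := by
    intro c x
    rw [integral_const_mul, ← eta_gauss x]
    exact congrArg (c * ·) (integral_ofReal (𝕜 := ℂ))
  have hcomp1 : (∫ l, (∫ t in Set.Ioi (0:ℝ),
        f l * (((l + ε) * Real.exp (-t ^ 2 * (l + ε) ^ 2) : ℝ) : ℂ)) ∂μ)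
      = ∫ l, f l * ((Real.sign (l + ε) * (Real.sqrt Real.pi / 2) : ℝ) : ℂ) ∂μ :=
    integral_congr_ae (Filter.Eventually.of_forall fun l => hinner (f l) (l + ε))
  have hcomp2 : (∫ l, (∫ t in Set.Ioi (0:ℝ),
        f l * ((l * Real.exp (-t ^ 2 * l ^ 2) : ℝ) : ℂ)) ∂μ)
      = ∫ l, f l * ((Real.sign l * (Real.sqrt Real.pi / 2) : ℝ) : ℂ) ∂μ :=
    integral_congr_ae (Filter.Eventually.of_forall fun l => hinner (f l) l)
  rw [hcomp1, hcomp2, ← integral_const_mul, ← integral_const_mul]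
  have hsqrt : Real.sqrt Real.pi ≠ 0 := (Real.sqrt_pos.mpr Real.pi_pos).ne'
  have hsimp : ∀ (c : ℂ) (s : ℝ),
      ((2 / Real.sqrt Real.pi : ℝ) : ℂ) * (c * ((s * (Real.sqrt Real.pi / 2) : ℝ) : ℂ))
        = c * ((s : ℝ) : ℂ) := by
    intro c s
    push_cast
    have : ((Real.sqrt Real.pi : ℂ)) ≠ 0 := by exact_mod_cast hsqrt
    field_simp
  rw [show (∫ l, ((2 / Real.sqrt Real.pi : ℝ) : ℂ) *
        (f l * ((Real.sign (l + ε) * (Real.sqrt Real.pi / 2) : ℝ) : ℂ)) ∂μ)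
      = ∫ l, f l * ((Real.sign (l + ε) : ℝ) : ℂ) ∂μ from
    integral_congr_ae (Filter.Eventually.of_forall fun l => hsimp (f l) (Real.sign (l + ε)))]
  rw [show (∫ l, ((2 / Real.sqrt Real.pi : ℝ) : ℂ) *
        (f l * ((Real.sign l * (Real.sqrt Real.pi / 2) : ℝ) : ℂ)) ∂μ)
      = ∫ l, f l * ((Real.sign l : ℝ) : ℂ) ∂μ from
    integral_congr_ae (Filter.Eventually.of_forall fun l => hsimp (f l) (Real.sign l))]
  -- combine the right-hand side into one integral
  have hInd : Integrable (Set.indicator ({0} : Set ℝ) f) μ :=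
    hf.indicator (measurableSet_singleton 0)
  have hSgn : Integrable (fun l => f l * ((Real.sign l : ℝ) : ℂ)) μ := by
    have hm : AEStronglyMeasurable (fun l : ℝ => ((Real.sign l : ℝ) : ℂ)) μ :=
      (Complex.measurable_ofReal.comp eta_measurable_sign).aestronglyMeasurable
    have h := Integrable.bdd_mul hf hm (c := 1) (Filter.Eventually.of_forall fun l => by
      rw [Complex.norm_real, Real.norm_eq_abs]
      rcases Real.sign_apply_eq l with h|h|h <;> rw [h] <;> norm_num)
    exact h.congr (Filter.Eventually.of_forall fun l => mul_comm _ _)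
  rw [← integral_add hInd hSgn]
  -- a.e. identity
  have haea : ∀ᵐ l ∂μ, l = 0 ∨ 2 * ε < |l| := by
    rw [ae_iff]
    refine measure_mono_null ?_ hμ
    intro l hl
    simp only [Set.mem_setOf_eq, Set.mem_diff, Set.mem_singleton_iff] at hl ⊢
    push_neg at hl
    exact ⟨hl.2, hl.1⟩
  refine integral_congr_ae ?_
  filter_upwards [haea] with l hl
  rcases hl with rfl | hl
  · simp [Real.sign_zero, Real.sign_of_pos hε]
  · have hl0 : l ≠ 0 := by
      intro h
      rw [h] at hl
      simp at hl
      linarith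
    have hsgn : Real.sign (l + ε) = Real.sign l := by
      rcases hl0.lt_or_gt with h | h
      · have : |l| = -l := abs_of_neg h
        rw [this] at hl
        rw [Real.sign_of_neg h, Real.sign_of_neg (by linarith)]
      · rw [Real.sign_of_pos h, Real.sign_of_pos (by linarith)]
    rw [hsgn, Set.indicator_of_notMem (by simpa using hl0), zero_add]
end
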